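/- arXiv:1501.04400 — 9 statements merged into one kernel-verified Lean document; each statement's English description precedes it below -/
import Mathlib

section
/- Let E be a module over L⁰ = L⁰(𝔉,ℝ) and 𝒫 a family of L⁰-seminorms on E. For finite 𝒬 ⊆ 𝒫 and ε ∈ L⁰₊₊ set U_{𝒬,ε} = {x ∈ E : ‖x‖ ≤ ε for all ‖·‖ ∈ 𝒬}. Then the family 𝒰_𝒫 = {U_{𝒬,ε} : 𝒬 ⊆ 𝒫 finite, ε ∈ L⁰₊₊} is a neighborhood base of 0 of a topology on E (namely 𝒯 = {V ⊆ E : for every y ∈ V there are finite 𝒬 ⊆ 𝒫 and ε ∈ L⁰₊₊ with y + U_{𝒬,ε} ⊆ V}), every U_{𝒬,ε} is L⁰-convex, L⁰-absorbent and L⁰-balanced, addition E × E → E is jointly continuous for 𝒯, and module multiplication L⁰ × E → E is jointly continuous when L⁰ carries 𝒯_c and E carries 𝒯. -/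
noncomputable section

open MeasureTheory Set Pointwise Filter Topology

namespace PaperL0

variable {Ω : Type*} [MeasurableSpace Ω]

instance commRingL0 (μ : Measure Ω) : CommRing (Ω →ₘ[μ] ℝ) :=
  { (inferInstance : AddCommGroup (Ω →ₘ[μ] ℝ)),
    (inferInstance : CommMonoid (Ω →ₘ[μ] ℝ)) with
    left_distrib := fun f g h => MeasureTheory.AEEqFun.toGerm_injective <| by
      simp [MeasureTheory.AEEqFun.mul_toGerm, MeasureTheory.AEEqFun.add_toGerm, mul_add]
    right_distrib := fun f g h => MeasureTheory.AEEqFun.toGerm_injective <| by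
      simp [MeasureTheory.AEEqFun.mul_toGerm, MeasureTheory.AEEqFun.add_toGerm, add_mul]
    zero_mul := fun f => MeasureTheory.AEEqFun.toGerm_injective <| by
      simp [MeasureTheory.AEEqFun.mul_toGerm, MeasureTheory.AEEqFun.zero_toGerm]
    mul_zero := fun f => MeasureTheory.AEEqFun.toGerm_injective <| by
      simp [MeasureTheory.AEEqFun.mul_toGerm, MeasureTheory.AEEqFun.zero_toGerm] }

variable (μ : Measure Ω)

/-- `L⁰₊`, the set of nonnegative elements of `L⁰`. -/
def Lpos : Set (Ω →ₘ[μ] ℝ) := {ξ | 0 ≤ ξ}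

/-- `L⁰₊₊`, the set of elements of `L⁰` which are `> 0` a.e. on `Ω`. -/
def Lspos : Set (Ω →ₘ[μ] ℝ) := {ξ | ∀ᵐ ω ∂μ, 0 < ξ ω}

/-- The absolute value `|ξ|` of an element of `L⁰`. -/
def aabs {μ : Measure Ω} (ξ : Ω →ₘ[μ] ℝ) : Ω →ₘ[μ] ℝ := ξ ⊔ -ξ

/-- `B_ε = {ξ ∈ L⁰ : |ξ| ≤ ε}`. -/
def ball (ε : Ω →ₘ[μ] ℝ) : Set (Ω →ₘ[μ] ℝ) := {ξ | aabs ξ ≤ ε}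

open Classical in
/-- `Ĩ_A`, the equivalence class of the indicator function of a (measurable) set `A`. -/
def ind (A : Set Ω) : Ω →ₘ[μ] ℝ :=
  if h : MeasurableSet A then
    AEEqFun.mk (A.indicator fun _ => (1 : ℝ))
      ((measurable_const.indicator h).aestronglyMeasurable)
  else 0

/-- A countable measurable partition of `Ω`. -/
def IsMeasPartition (A : ℕ → Set Ω) : Prop :=
  (∀ n, MeasurableSet (A n)) ∧ Pairwise (Function.onFun Disjoint A) ∧ (⋃ n, A n) = Set.univ

variable {E : Type*} [AddCommGroup E] [Module (Ω →ₘ[μ] ℝ) E]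

/-- `L⁰`-convexity of a subset of an `L⁰`-module. -/
def IsL0Convex (U : Set E) : Prop :=
  ∀ x ∈ U, ∀ y ∈ U, ∀ ξ : Ω →ₘ[μ] ℝ, 0 ≤ ξ → ξ ≤ 1 → ξ • x + (1 - ξ) • y ∈ U

/-- `L⁰`-absorbency of a subset of an `L⁰`-module. -/
def IsL0Absorbent (U : Set E) : Prop := ∀ x : E, ∃ ξ ∈ Lspos μ, x ∈ ξ • U

/-- `L⁰`-balancedness of a subset of an `L⁰`-module. -/
def IsL0Balanced (U : Set E) : Prop :=
  ∀ x ∈ U, ∀ ξ : Ω →ₘ[μ] ℝ, aabs ξ ≤ 1 → ξ • x ∈ U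

/-- An `L⁰`-seminorm on an `L⁰`-module. -/
structure IsL0Seminorm (p : E → Ω →ₘ[μ] ℝ) : Prop where
  nonneg : ∀ x, 0 ≤ p x
  homog : ∀ (ξ : Ω →ₘ[μ] ℝ) (x : E), p (ξ • x) = aabs ξ * p x
  triangle : ∀ x y, p (x + y) ≤ p x + p y

/-- The countable concatenation property for a subset of an `L⁰`-module. -/
def HasCCP (G : Set E) : Prop :=
  ∀ x : ℕ → E, (∀ n, x n ∈ G) → ∀ A : ℕ → Set Ω, IsMeasPartition A →
    (∃ y : E, ∀ n, ind μ (A n) • y = ind μ (A n) • x n) ∧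
      ∀ y : E, (∀ n, ind μ (A n) • y = ind μ (A n) • x n) → y ∈ G

/-- The relative countable concatenation property for a subset of an `L⁰`-module. -/
def HasRelCCP (G : Set E) : Prop :=
  ∀ x : ℕ → E, (∀ n, x n ∈ G) → ∀ A : ℕ → Set Ω, IsMeasPartition A →
    ∀ y : E, (∀ n, ind μ (A n) • y = ind μ (A n) • x n) → y ∈ G

/-- A `P`-atom of a measure. -/
def IsPAtom (A : Set Ω) : Prop :=
  MeasurableSet A ∧ 0 < μ A ∧ ∀ B, MeasurableSet B → B ⊆ A → μ B = 0 ∨ μ B = μ A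

end PaperL0

open PaperL0

/-! The sets `U_{Q,ε}` form a filter basis of an additive group topology: they are closed under
finite intersections (take `Q₁ ∪ Q₂` and `ε₁ ⊓ ε₂`), symmetric, and `U_{Q,δ} + U_{Q,δ} ⊆ U_{Q,ε}`
as soon as `δ + δ ≤ ε`. The open sets of that topology are exactly the ones described, and the
balls `B_ε` generate `𝒯_c` in the same way. Since `(ξ, x) ↦ ξ • x` is biadditive, its joint
continuity reduces to continuity at zero, jointly and in each variable separately; all three follow
from `‖ξ • x‖ = |ξ| ‖x‖` and the fact that for `a ∈ L⁰` and `ε ∈ L⁰₊₊` the element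
`δ = ε / (1 + |a|) ∈ L⁰₊₊` satisfies `a δ ≤ ε`. -/

namespace AddGroupFilterBasis

variable {G : Type*} [AddGroup G] (B : AddGroupFilterBasis G) {ι : Type*} {p : ι → Prop}
  {s : ι → Set G}

theorem hasBasis_nhds_zero_of_sets_eq (h : B.sets = s '' {i | p i}) :
    (@nhds G B.topology 0).HasBasis p s := by
  have hB := B.nhds_zero_hasBasis
  rw [show (· ∈ B) = (· ∈ s '' {i | p i}) from funext fun U => congrArg (U ∈ ·) h] at hB
  exact hB.to_hasBasis (by rintro _ ⟨i, hi, rfl⟩; exact ⟨i, hi, subset_rfl⟩)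
    fun i hi => ⟨s i, mem_image_of_mem s hi, subset_rfl⟩

theorem isOpen_iff_of_sets_eq (h : B.sets = s '' {i | p i}) {V : Set G} :
    IsOpen[B.topology] V ↔ ∀ y ∈ V, ∃ i, p i ∧ ∀ u ∈ s i, y + u ∈ V := by
  let _ := B.topology
  refine isOpen_iff_mem_nhds.trans (forall₂_congr fun y _ => ?_)
  rw [← map_add_left_nhds_zero, ((B.hasBasis_nhds_zero_of_sets_eq h).map _).mem_iff]
  simp only [image_subset_iff]
  rfl

end AddGroupFilterBasis

namespace PaperL0

variable {Ω : Type*} [MeasurableSpace Ω] {μ : Measure Ω}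

instance : IsOrderedAddMonoid (Ω →ₘ[μ] ℝ) where
  add_le_add_left a b hab c := by
    rw [← AEEqFun.coeFn_le] at hab ⊢
    filter_upwards [hab, AEEqFun.coeFn_add a c, AEEqFun.coeFn_add b c] with ω h ha hb
    simp only [ha, hb, Pi.add_apply]
    linarith

instance : ZeroLEOneClass (Ω →ₘ[μ] ℝ) where
  zero_le_one := by
    rw [← AEEqFun.coeFn_le]
    filter_upwards [AEEqFun.coeFn_zero (β := ℝ) (μ := μ), AEEqFun.coeFn_one (β := ℝ) (μ := μ)]
      with ω h0 h1
    simp [h0, h1]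

instance : IsOrderedRing (Ω →ₘ[μ] ℝ) := .of_mul_nonneg fun a b ha hb => by
  rw [← AEEqFun.coeFn_le] at ha hb ⊢
  filter_upwards [ha, hb, AEEqFun.coeFn_mul a b, AEEqFun.coeFn_zero (β := ℝ) (μ := μ)]
    with ω ha hb hab h0
  simp only [h0, hab, Pi.zero_apply, Pi.mul_apply] at ha hb ⊢
  exact mul_nonneg ha hb

theorem aabs_eq_abs (ξ : Ω →ₘ[μ] ℝ) : aabs ξ = |ξ| := rfl

section Lspos

variable {ε δ : Ω →ₘ[μ] ℝ}

theorem nonneg_of_mem_Lspos (hε : ε ∈ Lspos μ) : 0 ≤ ε := by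
  rw [← AEEqFun.coeFn_le]
  filter_upwards [hε, AEEqFun.coeFn_zero (β := ℝ) (μ := μ)] with ω hε h0
  simpa [h0] using hε.le

theorem mem_Lspos_of_le (hε : ε ∈ Lspos μ) (h : ε ≤ δ) : δ ∈ Lspos μ := by
  filter_upwards [hε, AEEqFun.coeFn_le.2 h] with ω hε h
  exact hε.trans_le h

theorem one_mem_Lspos : (1 : Ω →ₘ[μ] ℝ) ∈ Lspos μ := by
  filter_upwards [AEEqFun.coeFn_one (β := ℝ) (μ := μ)] with ω h1
  simp [h1]

theorem inf_mem_Lspos (hε : ε ∈ Lspos μ) (hδ : δ ∈ Lspos μ) : ε ⊓ δ ∈ Lspos μ := by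
  filter_upwards [hε, hδ, AEEqFun.coeFn_inf ε δ] with ω hε hδ h
  simpa [h] using ⟨hε, hδ⟩

theorem mul_mem_Lspos (hε : ε ∈ Lspos μ) (hδ : δ ∈ Lspos μ) : ε * δ ∈ Lspos μ := by
  filter_upwards [hε, hδ, AEEqFun.coeFn_mul ε δ] with ω hε hδ h
  simpa [h] using mul_pos hε hδ

theorem exists_mul_eq_one_of_mem_Lspos (hε : ε ∈ Lspos μ) :
    ∃ η ∈ Lspos μ, ε * η = 1 := by
  refine ⟨ε.compMeasurable (·⁻¹) measurable_inv, ?_, ?_⟩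
  · filter_upwards [hε, AEEqFun.coeFn_compMeasurable (·⁻¹) measurable_inv ε] with ω hε h
    simpa [h] using hε
  · apply AEEqFun.ext
    filter_upwards [hε, AEEqFun.coeFn_mul ε (ε.compMeasurable (·⁻¹) measurable_inv),
      AEEqFun.coeFn_compMeasurable (·⁻¹) measurable_inv ε,
      AEEqFun.coeFn_one (β := ℝ) (μ := μ)] with ω hε hmul hinv h1
    simp [hmul, hinv, h1, hε.ne']

theorem exists_add_self_le_of_mem_Lspos (hε : ε ∈ Lspos μ) : ∃ δ ∈ Lspos μ, δ + δ ≤ ε := by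
  obtain ⟨η, hη, h2η⟩ := exists_mul_eq_one_of_mem_Lspos
    (mem_Lspos_of_le one_mem_Lspos (le_add_of_nonneg_right zero_le_one) :
      (1 + 1 : Ω →ₘ[μ] ℝ) ∈ Lspos μ)
  refine ⟨ε * η, mul_mem_Lspos hε hη, le_of_eq ?_⟩
  linear_combination ε * h2η

theorem exists_mul_le_of_mem_Lspos (a : Ω →ₘ[μ] ℝ) (hε : ε ∈ Lspos μ) :
    ∃ δ ∈ Lspos μ, a * δ ≤ ε := by
  have h1a : (1 + |a| : Ω →ₘ[μ] ℝ) ∈ Lspos μ :=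
    mem_Lspos_of_le one_mem_Lspos (le_add_of_nonneg_right (abs_nonneg a))
  obtain ⟨η, hη, haη⟩ := exists_mul_eq_one_of_mem_Lspos h1a
  have hδ := mul_mem_Lspos hε hη
  refine ⟨ε * η, hδ, ?_⟩
  calc a * (ε * η) ≤ (1 + |a|) * (ε * η) :=
        mul_le_mul_of_nonneg_right ((le_abs_self a).trans (le_add_of_nonneg_left zero_le_one))
          (nonneg_of_mem_Lspos hδ)
    _ = ε := by linear_combination ε * haη

theorem exists_mul_self_le_of_mem_Lspos (hε : ε ∈ Lspos μ) : ∃ δ ∈ Lspos μ, δ * δ ≤ ε := by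
  have hδ := inf_mem_Lspos hε one_mem_Lspos
  refine ⟨ε ⊓ 1, hδ, ?_⟩
  calc (ε ⊓ 1) * (ε ⊓ 1) ≤ (ε ⊓ 1) * 1 :=
        mul_le_mul_of_nonneg_left inf_le_right (nonneg_of_mem_Lspos hδ)
    _ ≤ ε := by rw [mul_one]; exact inf_le_left

end Lspos

variable (μ) in
abbrev ballBasis : AddGroupFilterBasis (Ω →ₘ[μ] ℝ) :=
  addGroupFilterBasisOfComm (ball μ '' Lspos μ) ⟨_, mem_image_of_mem _ one_mem_Lspos⟩
    (by
      rintro _ _ ⟨ε₁, hε₁, rfl⟩ ⟨ε₂, hε₂, rfl⟩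
      exact ⟨_, mem_image_of_mem _ (inf_mem_Lspos hε₁ hε₂),
        fun ξ (hξ : |ξ| ≤ _) => ⟨hξ.trans inf_le_left, hξ.trans inf_le_right⟩⟩)
    (by
      rintro _ ⟨ε, hε, rfl⟩
      show |0| ≤ ε
      simpa using nonneg_of_mem_Lspos hε)
    (by
      rintro _ ⟨ε, hε, rfl⟩
      obtain ⟨δ, hδ, hδε⟩ := exists_add_self_le_of_mem_Lspos hε
      refine ⟨_, mem_image_of_mem _ hδ, ?_⟩
      rintro _ ⟨ξ, hξ, η, hη, rfl⟩
      exact (abs_add_le ξ η).trans ((add_le_add hξ hη).trans hδε))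
    (by
      rintro _ ⟨ε, hε, rfl⟩
      exact ⟨_, mem_image_of_mem _ hε, fun ξ hξ => show |-ξ| ≤ ε by rwa [abs_neg]⟩)

section Seminorm

variable {E : Type*} [AddCommGroup E] [Module (Ω →ₘ[μ] ℝ) E]

namespace IsL0Seminorm

variable {p : E → Ω →ₘ[μ] ℝ} (hp : IsL0Seminorm μ p)
include hp

theorem map_zero : p 0 = 0 := by
  simpa [aabs_eq_abs] using hp.homog 0 0

theorem map_neg (x : E) : p (-x) = p x := by
  simpa [aabs_eq_abs, abs_of_nonneg (zero_le_one' (Ω →ₘ[μ] ℝ))] using hp.homog (-1) x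

end IsL0Seminorm

def seminormBall (Q : Set (E → Ω →ₘ[μ] ℝ)) (ε : Ω →ₘ[μ] ℝ) : Set E := {x | ∀ p ∈ Q, p x ≤ ε}

variable {Q Ps : Set (E → Ω →ₘ[μ] ℝ)} {ε : Ω →ₘ[μ] ℝ}

theorem smul_mem_seminormBall_iff (hQ : ∀ p ∈ Q, IsL0Seminorm μ p) {ξ : Ω →ₘ[μ] ℝ} {x : E} :
    ξ • x ∈ seminormBall Q ε ↔ ∀ p ∈ Q, |ξ| * p x ≤ ε := by
  refine forall₂_congr fun p hp => ?_
  rw [(hQ p hp).homog, aabs_eq_abs]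

theorem isL0Convex_seminormBall (hQ : ∀ p ∈ Q, IsL0Seminorm μ p) :
    IsL0Convex μ (seminormBall Q ε) := by
  intro x hx y hy ξ hξ₀ hξ₁ p hp
  have hξ₁' : 0 ≤ 1 - ξ := sub_nonneg.2 hξ₁
  calc p (ξ • x + (1 - ξ) • y) ≤ ξ * p x + (1 - ξ) * p y := by
        simpa [(hQ p hp).homog, aabs_eq_abs, abs_of_nonneg hξ₀, abs_of_nonneg hξ₁']
          using (hQ p hp).triangle (ξ • x) ((1 - ξ) • y)
    _ ≤ ξ * ε + (1 - ξ) * ε := add_le_add (mul_le_mul_of_nonneg_left (hx p hp) hξ₀)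
        (mul_le_mul_of_nonneg_left (hy p hp) hξ₁')
    _ = ε := by ring

theorem isL0Balanced_seminormBall (hQ : ∀ p ∈ Q, IsL0Seminorm μ p) :
    IsL0Balanced μ (seminormBall Q ε) := fun x hx _ hξ =>
  (smul_mem_seminormBall_iff hQ).2 fun p hp =>
    (mul_le_of_le_one_left ((hQ p hp).nonneg x) hξ).trans (hx p hp)

theorem isL0Absorbent_seminormBall (hQ : ∀ p ∈ Q, IsL0Seminorm μ p) (hfin : Q.Finite)
    (hε : ε ∈ Lspos μ) : IsL0Absorbent μ (seminormBall Q ε) := by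
  intro x
  obtain ⟨S, hS⟩ := (hfin.image fun p => p x).bddAbove
  obtain ⟨δ, hδ, hSδ⟩ := exists_mul_le_of_mem_Lspos S hε
  obtain ⟨η, hη, hδη⟩ := exists_mul_eq_one_of_mem_Lspos hδ
  refine ⟨η, hη, δ • x, (smul_mem_seminormBall_iff hQ).2 fun p hp => ?_, ?_⟩
  · rw [abs_of_nonneg (nonneg_of_mem_Lspos hδ), mul_comm]
    exact (mul_le_mul_of_nonneg_right (hS (mem_image_of_mem _ hp))
      (nonneg_of_mem_Lspos hδ)).trans hSδ
  · change η • δ • x = x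
    rw [smul_smul, mul_comm, hδη, one_smul]

variable (Ps) in
abbrev seminormBasis (hP : ∀ p ∈ Ps, IsL0Seminorm μ p) : AddGroupFilterBasis E :=
  addGroupFilterBasisOfComm ((fun Qε => seminormBall Qε.1 Qε.2) ''
      {Qε : Set (E → Ω →ₘ[μ] ℝ) × (Ω →ₘ[μ] ℝ) | Qε.1.Finite ∧ Qε.1 ⊆ Ps ∧ Qε.2 ∈ Lspos μ})
    ⟨_, mem_image_of_mem _ (show (∅, 1) ∈ _ from ⟨finite_empty, empty_subset _, one_mem_Lspos⟩)⟩
    (by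
      rintro _ _ ⟨⟨Q₁, ε₁⟩, ⟨hQ₁, hQ₁P, hε₁⟩, rfl⟩ ⟨⟨Q₂, ε₂⟩, ⟨hQ₂, hQ₂P, hε₂⟩, rfl⟩
      refine ⟨_, mem_image_of_mem _ (show (Q₁ ∪ Q₂, ε₁ ⊓ ε₂) ∈ _ from
        ⟨hQ₁.union hQ₂, union_subset hQ₁P hQ₂P, inf_mem_Lspos hε₁ hε₂⟩), fun x hx => ?_⟩
      exact ⟨fun p hp => (hx p (.inl hp)).trans inf_le_left,
        fun p hp => (hx p (.inr hp)).trans inf_le_right⟩)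
    (by
      rintro _ ⟨⟨Q, ε⟩, ⟨-, hQP, hε⟩, rfl⟩ p hp
      rw [(hP p (hQP hp)).map_zero]
      exact nonneg_of_mem_Lspos hε)
    (by
      rintro _ ⟨⟨Q, ε⟩, ⟨hQ, hQP, hε⟩, rfl⟩
      obtain ⟨δ, hδ, hδε⟩ := exists_add_self_le_of_mem_Lspos hε
      refine ⟨_, mem_image_of_mem _ (show (Q, δ) ∈ _ from ⟨hQ, hQP, hδ⟩), ?_⟩
      rintro _ ⟨x, hx, y, hy, rfl⟩ p hp
      exact ((hP p (hQP hp)).triangle x y).trans ((add_le_add (hx p hp) (hy p hp)).trans hδε))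
    (by
      rintro _ ⟨⟨Q, ε⟩, ⟨hQ, hQP, hε⟩, rfl⟩
      refine ⟨_, mem_image_of_mem _ (show (Q, ε) ∈ _ from ⟨hQ, hQP, hε⟩), fun x hx p hp => ?_⟩
      simpa only [mem_preimage, (hP p (hQP hp)).map_neg] using hx p hp)

theorem continuousSMul_seminormBasis (hP : ∀ p ∈ Ps, IsL0Seminorm μ p) :
    @ContinuousSMul (Ω →ₘ[μ] ℝ) E _ (ballBasis μ).topology (seminormBasis Ps hP).topology := by
  let _ := (ballBasis μ).topology
  let _ := (seminormBasis Ps hP).topology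
  have hL := (ballBasis μ).hasBasis_nhds_zero_of_sets_eq (p := (· ∈ Lspos μ)) rfl
  have hE := (seminormBasis Ps hP).hasBasis_nhds_zero_of_sets_eq rfl
  have hQ : ∀ {Q}, Q ⊆ Ps → ∀ p ∈ Q, IsL0Seminorm μ p := fun hQP p hp => hP p (hQP hp)
  suffices Continuous fun x : (Ω →ₘ[μ] ℝ) × E => AddMonoidHom.smul x.1 x.2 from ⟨this⟩
  refine continuous_of_continuousAt_zero₂ _ ?_ ?_ ?_
  · simp only [ContinuousAt, AddMonoidHom.coe_smul', DistribSMul.toAddMonoidHom_apply, smul_zero,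
      nhds_prod_eq]
    refine (hL.prod hE).tendsto_iff hE |>.2 fun ⟨Q, ε⟩ ⟨hQfin, hQP, hε⟩ => ?_
    obtain ⟨δ, hδ, hδδ⟩ := exists_mul_self_le_of_mem_Lspos hε
    refine ⟨(δ, Q, δ), ⟨hδ, hQfin, hQP, hδ⟩, fun ⟨ξ, x⟩ ⟨hξ, hx⟩ => ?_⟩
    refine (smul_mem_seminormBall_iff (hQ hQP)).2 fun p hp => ?_
    exact (mul_le_mul hξ (hx p hp) ((hQ hQP p hp).nonneg x) (nonneg_of_mem_Lspos hδ)).trans hδδ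
  · intro ξ
    simp only [ContinuousAt, AddMonoidHom.coe_smul', DistribSMul.toAddMonoidHom_apply, smul_zero]
    refine hE.tendsto_iff hE |>.2 fun ⟨Q, ε⟩ ⟨hQfin, hQP, hε⟩ => ?_
    obtain ⟨δ, hδ, hξδ⟩ := exists_mul_le_of_mem_Lspos |ξ| hε
    refine ⟨(Q, δ), ⟨hQfin, hQP, hδ⟩, fun x hx => ?_⟩
    refine (smul_mem_seminormBall_iff (hQ hQP)).2 fun p hp => ?_
    exact (mul_le_mul_of_nonneg_left (hx p hp) (abs_nonneg ξ)).trans hξδ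
  · intro x
    simp only [ContinuousAt, AddMonoidHom.coe_smul', DistribSMul.toAddMonoidHom_apply, zero_smul]
    refine hL.tendsto_iff hE |>.2 fun ⟨Q, ε⟩ ⟨hQfin, hQP, hε⟩ => ?_
    obtain ⟨S, hS⟩ := (hQfin.image fun p => p x).bddAbove
    obtain ⟨δ, hδ, hSδ⟩ := exists_mul_le_of_mem_Lspos S hε
    refine ⟨δ, hδ, fun ξ hξ => (smul_mem_seminormBall_iff (hQ hQP)).2 fun p hp => ?_⟩
    calc |ξ| * p x ≤ δ * S := mul_le_mul hξ (hS (mem_image_of_mem _ hp))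
          ((hQ hQP p hp).nonneg x) (nonneg_of_mem_Lspos hδ)
      _ = S * δ := mul_comm δ S
      _ ≤ ε := hSδ

end Seminorm

end PaperL0

theorem statement1_general
    {Ω : Type*} [MeasurableSpace Ω] (P : Measure Ω)
    {E : Type*} [AddCommGroup E] [Module (Ω →ₘ[P] ℝ) E]
    (Ps : Set (E → Ω →ₘ[P] ℝ)) (hP : ∀ p ∈ Ps, IsL0Seminorm P p) :
    ∃ T : TopologicalSpace E,
      (∀ V : Set E, IsOpen[T] V ↔ ∀ y ∈ V, ∃ Qs : Set (E → Ω →ₘ[P] ℝ), Qs.Finite ∧ Qs ⊆ Ps ∧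
          ∃ ε ∈ Lspos P, ∀ u : E, (∀ p ∈ Qs, p u ≤ ε) → y + u ∈ V) ∧
      (@nhds E T 0).HasBasis
        (fun Qε : Set (E → Ω →ₘ[P] ℝ) × (Ω →ₘ[P] ℝ) =>
          Qε.1.Finite ∧ Qε.1 ⊆ Ps ∧ Qε.2 ∈ Lspos P)
        (fun Qε => {x : E | ∀ p ∈ Qε.1, p x ≤ Qε.2}) ∧
      (∀ Qs : Set (E → Ω →ₘ[P] ℝ), Qs.Finite → Qs ⊆ Ps → ∀ ε ∈ Lspos P,
        IsL0Convex P {x : E | ∀ p ∈ Qs, p x ≤ ε} ∧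
        IsL0Absorbent P {x : E | ∀ p ∈ Qs, p x ≤ ε} ∧
        IsL0Balanced P {x : E | ∀ p ∈ Qs, p x ≤ ε}) ∧
      Continuous[@instTopologicalSpaceProd E E T T, T] (fun p : E × E => p.1 + p.2) ∧
      ∀ Tc : TopologicalSpace (Ω →ₘ[P] ℝ),
        (∀ W : Set (Ω →ₘ[P] ℝ),
            IsOpen[Tc] W ↔ ∀ ξ ∈ W, ∃ ε ∈ Lspos P, ∀ η ∈ ball P ε, ξ + η ∈ W) →
        Continuous[@instTopologicalSpaceProd (Ω →ₘ[P] ℝ) E Tc T, T]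
          (fun p : (Ω →ₘ[P] ℝ) × E => p.1 • p.2) := by
  let B := seminormBasis Ps hP
  refine ⟨B.topology, fun V => ?_, B.hasBasis_nhds_zero_of_sets_eq rfl,
    fun Qs hfin hQP ε hε => ?_, @continuous_add E B.topology _ _, fun Tc hTc => ?_⟩
  · rw [B.isOpen_iff_of_sets_eq rfl]
    simp only [Prod.exists, and_assoc, seminormBall, mem_ofPred_eq, exists_and_left]
  · have hQ : ∀ p ∈ Qs, IsL0Seminorm P p := fun p hp => hP p (hQP hp)
    exact ⟨isL0Convex_seminormBall hQ, isL0Absorbent_seminormBall hQ hfin hε,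
      isL0Balanced_seminormBall hQ⟩
  · obtain rfl : Tc = (ballBasis P).topology := TopologicalSpace.ext <| funext fun W =>
      propext <| (hTc W).trans ((ballBasis P).isOpen_iff_of_sets_eq (p := (· ∈ Lspos P)) rfl).symm
    exact (continuousSMul_seminormBasis hP).continuous_smul

/-- Proposition 2.4 of FKV: the family of sets U_{Qs,ε} determined by a family Ps of
L⁰-seminorms is a neighborhood base of 0 of a locally L⁰-convex topology. -/
theorem statement1
    {Ω : Type*} [MeasurableSpace Ω] (P : Measure Ω) [IsProbabilityMeasure P]
    {E : Type*} [AddCommGroup E] [Module (Ω →ₘ[P] ℝ) E]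
    (Ps : Set (E → Ω →ₘ[P] ℝ)) (hP : ∀ p ∈ Ps, IsL0Seminorm P p) :
    ∃ T : TopologicalSpace E,
      (∀ V : Set E, IsOpen[T] V ↔ ∀ y ∈ V, ∃ Qs : Set (E → Ω →ₘ[P] ℝ), Qs.Finite ∧ Qs ⊆ Ps ∧
          ∃ ε ∈ Lspos P, ∀ u : E, (∀ p ∈ Qs, p u ≤ ε) → y + u ∈ V) ∧
      (@nhds E T 0).HasBasis
        (fun Qε : Set (E → Ω →ₘ[P] ℝ) × (Ω →ₘ[P] ℝ) =>
          Qε.1.Finite ∧ Qε.1 ⊆ Ps ∧ Qε.2 ∈ Lspos P)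
        (fun Qε => {x : E | ∀ p ∈ Qε.1, p x ≤ Qε.2}) ∧
      (∀ Qs : Set (E → Ω →ₘ[P] ℝ), Qs.Finite → Qs ⊆ Ps → ∀ ε ∈ Lspos P,
        IsL0Convex P {x : E | ∀ p ∈ Qs, p x ≤ ε} ∧
        IsL0Absorbent P {x : E | ∀ p ∈ Qs, p x ≤ ε} ∧
        IsL0Balanced P {x : E | ∀ p ∈ Qs, p x ≤ ε}) ∧
      Continuous[@instTopologicalSpaceProd E E T T, T] (fun p : E × E => p.1 + p.2) ∧
      ∀ Tc : TopologicalSpace (Ω →ₘ[P] ℝ),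
        (∀ W : Set (Ω →ₘ[P] ℝ),
            IsOpen[Tc] W ↔ ∀ ξ ∈ W, ∃ ε ∈ Lspos P, ∀ η ∈ ball P ε, ξ + η ∈ W) →
        Continuous[@instTopologicalSpaceProd (Ω →ₘ[P] ℝ) E Tc T, T]
          (fun p : (Ω →ₘ[P] ℝ) × E => p.1 • p.2) :=
  statement1_general P Ps hP
end
end

section
/- Let E be a module over L⁰ = L⁰(𝔉,ℝ), let p be an L⁰-seminorm on E, and set V = {x ∈ E : p(x) ≤ 1}. Then for every x ∈ E, p(x) is the greatest lower bound in (L⁰, ≤) of the set {ξ ∈ L⁰₊₊ : x ∈ ξV}; equivalently, the random gauge function of V satisfies p_V = p. -/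
noncomputable section

open MeasureTheory Set Pointwise Filter Topology

open PaperL0

/-- Proposition 2.6(1): for an L⁰-seminorm p and V = {x : p x ≤ 1}, the random gauge
function of V is p itself: for every x, p x is the greatest lower bound of
{ξ ∈ L⁰₊₊ : x ∈ ξV}, and also of {ξ ∈ L⁰₊ : x ∈ ξV} (i.e. p_V = p). -/
theorem statement2
    {Ω : Type*} [MeasurableSpace Ω] (P : Measure Ω) [IsProbabilityMeasure P]
    {E : Type*} [AddCommGroup E] [Module (Ω →ₘ[P] ℝ) E]
    (p : E → Ω →ₘ[P] ℝ) (hp : IsL0Seminorm P p) (x : E) :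
    IsGLB {ξ : Ω →ₘ[P] ℝ | ξ ∈ Lspos P ∧ x ∈ ξ • {z : E | p z ≤ 1}} (p x) ∧
    IsGLB {ξ : Ω →ₘ[P] ℝ | ξ ∈ Lpos P ∧ x ∈ ξ • {z : E | p z ≤ 1}} (p x) := by
  set V : Set E := {z : E | p z ≤ 1} with hV
  -- p x is a lower bound of the L⁰₊ set
  have hlbPos : p x ∈ lowerBounds {ξ : Ω →ₘ[P] ℝ | ξ ∈ Lpos P ∧ x ∈ ξ • V} := by
    rintro ξ ⟨hξ0, hxξ⟩
    rw [Set.mem_smul_set] at hxξ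
    obtain ⟨z, hz, rfl⟩ := hxξ
    rw [hp.homog]
    have habs : aabs ξ = ξ := by
      apply sup_eq_left.mpr
      rw [← MeasureTheory.AEEqFun.coeFn_le]
      filter_upwards [MeasureTheory.AEEqFun.coeFn_neg ξ,
        MeasureTheory.AEEqFun.coeFn_le.mpr hξ0,
        MeasureTheory.AEEqFun.coeFn_zero (β := ℝ) (μ := P)] with ω h1 h2 h3
      rw [h1]
      simp only [Pi.neg_apply]
      rw [h3] at h2
      simp only [Pi.zero_apply] at h2
      linarith
    rw [habs]
    rw [← MeasureTheory.AEEqFun.coeFn_le]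
    have hz' : ⇑(p z) ≤ᵐ[P] ⇑(1 : Ω →ₘ[P] ℝ) := MeasureTheory.AEEqFun.coeFn_le.mpr hz
    have hξ0' : ⇑(0 : Ω →ₘ[P] ℝ) ≤ᵐ[P] ⇑ξ := MeasureTheory.AEEqFun.coeFn_le.mpr hξ0
    filter_upwards [MeasureTheory.AEEqFun.coeFn_mul ξ (p z), hz', hξ0',
      MeasureTheory.AEEqFun.coeFn_one (β := ℝ) (μ := P),
      MeasureTheory.AEEqFun.coeFn_zero (β := ℝ) (μ := P)] with ω h1 h2 h3 h4 h5
    rw [h1]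
    simp only [Pi.mul_apply]
    rw [h4] at h2
    rw [h5] at h3
    simp only [Pi.one_apply] at h2
    simp only [Pi.zero_apply] at h3
    calc ξ ω * p z ω ≤ ξ ω * 1 := mul_le_mul_of_nonneg_left h2 h3
    _ = ξ ω := mul_one _
  have hsub : {ξ : Ω →ₘ[P] ℝ | ξ ∈ Lspos P ∧ x ∈ ξ • V} ⊆
      {ξ : Ω →ₘ[P] ℝ | ξ ∈ Lpos P ∧ x ∈ ξ • V} := by
    rintro ξ ⟨hξ0, hxξ⟩
    refine ⟨?_, hxξ⟩
    rw [Lpos, Set.mem_setOf_eq, ← MeasureTheory.AEEqFun.coeFn_le]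
    filter_upwards [hξ0, MeasureTheory.AEEqFun.coeFn_zero (β := ℝ) (μ := P)] with ω h1 h2
    rw [h2]; exact le_of_lt h1
  -- the key: for every ε > 0, p x + const ε belongs to the L⁰₊₊ set
  have hmem : ∀ ε : ℝ, 0 < ε →
      (p x + MeasureTheory.AEEqFun.const Ω (ε : ℝ)) ∈
        {ξ : Ω →ₘ[P] ℝ | ξ ∈ Lspos P ∧ x ∈ ξ • V} := by
    intro ε hε
    set ξ : Ω →ₘ[P] ℝ := p x + MeasureTheory.AEEqFun.const Ω (ε : ℝ) with hξdef
    have hpx0 : ⇑(0 : Ω →ₘ[P] ℝ) ≤ᵐ[P] ⇑(p x) :=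
      MeasureTheory.AEEqFun.coeFn_le.mpr (hp.nonneg x)
    have hξpos : ∀ᵐ ω ∂P, 0 < ξ ω := by
      filter_upwards [MeasureTheory.AEEqFun.coeFn_add (p x) (MeasureTheory.AEEqFun.const Ω (ε : ℝ)),
        MeasureTheory.AEEqFun.coeFn_const (α := Ω) (μ := P) (ε : ℝ), hpx0,
        MeasureTheory.AEEqFun.coeFn_zero (β := ℝ) (μ := P)] with ω h1 h2 h3 h4
      rw [hξdef, h1]
      simp only [Pi.add_apply, h2, Function.const_apply]
      rw [h4] at h3
      simp only [Pi.zero_apply] at h3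
      linarith
    refine ⟨hξpos, ?_⟩
    -- the inverse of ξ
    set ζ : Ω →ₘ[P] ℝ := MeasureTheory.AEEqFun.mk (fun ω => (ξ ω)⁻¹)
      ((ξ.aemeasurable.inv).aestronglyMeasurable) with hζdef
    have hζcoe : ⇑ζ =ᵐ[P] fun ω => (ξ ω)⁻¹ := MeasureTheory.AEEqFun.coeFn_mk _ _
    have hmul : ξ * ζ = 1 := by
      apply MeasureTheory.AEEqFun.ext
      filter_upwards [MeasureTheory.AEEqFun.coeFn_mul ξ ζ, hζcoe, hξpos,
        MeasureTheory.AEEqFun.coeFn_one (β := ℝ) (μ := P)] with ω h1 h2 h3 h4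
      rw [h1, h4]
      simp only [Pi.mul_apply, h2]
      exact mul_inv_cancel₀ (ne_of_gt h3)
    rw [Set.mem_smul_set]
    refine ⟨ζ • x, ?_, ?_⟩
    · -- p (ζ • x) ≤ 1
      show p (ζ • x) ≤ 1
      rw [hp.homog, ← MeasureTheory.AEEqFun.coeFn_le]
      have habs : ⇑(aabs ζ) =ᵐ[P] fun ω => |ζ ω| := by
        filter_upwards [MeasureTheory.AEEqFun.coeFn_sup ζ (-ζ),
          MeasureTheory.AEEqFun.coeFn_neg ζ] with ω h1 h2
        rw [aabs, h1, h2]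
        rfl
      have hlepx : ⇑(p x) ≤ᵐ[P] ⇑ξ := by
        filter_upwards [MeasureTheory.AEEqFun.coeFn_add (p x)
          (MeasureTheory.AEEqFun.const Ω (ε : ℝ)),
          MeasureTheory.AEEqFun.coeFn_const (α := Ω) (μ := P) (ε : ℝ)] with ω h1 h2
        rw [hξdef, h1]
        simp only [Pi.add_apply, h2, Function.const_apply]
        linarith
      filter_upwards [MeasureTheory.AEEqFun.coeFn_mul (aabs ζ) (p x), habs, hζcoe, hξpos,
        hlepx, MeasureTheory.AEEqFun.coeFn_one (β := ℝ) (μ := P)] with ω h1 h2 h3 h4 h5 h6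
      rw [h1, h6]
      simp only [Pi.mul_apply, Pi.one_apply, h2, h3]
      rw [abs_of_nonneg (inv_nonneg.mpr (le_of_lt h4))]
      rw [inv_mul_le_iff₀ h4, mul_one]
      exact h5
    · rw [smul_smul, hmul, one_smul]
  -- the a.e. limit argument for the greatest lower bound
  have hglb1 : ∀ b ∈ lowerBounds {ξ : Ω →ₘ[P] ℝ | ξ ∈ Lspos P ∧ x ∈ ξ • V}, b ≤ p x := by
    intro b hb
    have hbn : ∀ n : ℕ, b ≤ p x + MeasureTheory.AEEqFun.const Ω ((1 : ℝ) / (n + 1)) :=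
      fun n => hb (hmem _ (by positivity))
    rw [← MeasureTheory.AEEqFun.coeFn_le]
    have hae : ∀ᵐ ω ∂P, ∀ n : ℕ, b ω ≤ p x ω + (1 : ℝ) / (n + 1) := by
      rw [MeasureTheory.ae_all_iff]
      intro n
      filter_upwards [MeasureTheory.AEEqFun.coeFn_le.mpr (hbn n),
        MeasureTheory.AEEqFun.coeFn_add (p x)
          (MeasureTheory.AEEqFun.const Ω ((1 : ℝ) / (n + 1))),
        MeasureTheory.AEEqFun.coeFn_const (α := Ω) (μ := P) ((1 : ℝ) / (n + 1))]
        with ω h1 h2 h3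
      rw [h2] at h1
      simpa [h3] using h1
    filter_upwards [hae] with ω hω
    refine le_of_forall_pos_le_add fun ε hε => ?_
    obtain ⟨n, hn⟩ := exists_nat_one_div_lt hε
    exact (hω n).trans (by linarith)
  have hGLB1 : IsGLB {ξ : Ω →ₘ[P] ℝ | ξ ∈ Lspos P ∧ x ∈ ξ • V} (p x) :=
    ⟨fun ξ hξ => hlbPos (hsub hξ), hglb1⟩
  refine ⟨hGLB1, hlbPos, fun b hb => hglb1 b fun ξ hξ => hb (hsub hξ)⟩
end
end

section
/- Let E be a module over L⁰ = L⁰(𝔉,ℝ) and let U ⊆ E be L⁰-convex, L⁰-absorbent and L⁰-balanced. Suppose p_U : E → L⁰₊ satisfies that p_U(x) is the greatest lower bound in (L⁰, ≤) of {ξ ∈ L⁰₊ : x ∈ ξU} for every x ∈ E. Then p_U is an L⁰-seminorm on E (i.e., p_U(ξx) = |ξ|·p_U(x) for all ξ ∈ L⁰, x ∈ E, and p_U(x+y) ≤ p_U(x) + p_U(y) for all x, y ∈ E), and moreover p_U(x) is also the greatest lower bound of {ξ ∈ L⁰₊₊ : x ∈ ξU} for every x ∈ E. -/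
noncomputable section

open MeasureTheory Set Pointwise Filter Topology

open PaperL0

namespace Statement4Aux

open MeasureTheory PaperL0 Set Pointwise

variable {Ω : Type*} [MeasurableSpace Ω] {P : Measure Ω}

def mkL (f : Ω → ℝ) (hf : Measurable f) : Ω →ₘ[P] ℝ :=
  AEEqFun.mk f hf.aestronglyMeasurable

theorem mkL_ae (f : Ω → ℝ) (hf : Measurable f) : ⇑(mkL f hf : Ω →ₘ[P] ℝ) =ᵐ[P] f :=
  AEEqFun.coeFn_mk f _

theorem le_ae {f g : Ω →ₘ[P] ℝ} : f ≤ g ↔ ∀ᵐ ω ∂P, f ω ≤ g ω :=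
  AEEqFun.coeFn_le.symm

theorem mul_ae (f g : Ω →ₘ[P] ℝ) : ⇑(f * g) =ᵐ[P] fun ω => f ω * g ω :=
  AEEqFun.coeFn_mul f g

theorem add_ae (f g : Ω →ₘ[P] ℝ) : ⇑(f + g) =ᵐ[P] fun ω => f ω + g ω :=
  AEEqFun.coeFn_add f g

theorem sub_ae (f g : Ω →ₘ[P] ℝ) : ⇑(f - g) =ᵐ[P] fun ω => f ω - g ω :=
  AEEqFun.coeFn_sub f g

theorem one_ae : ⇑(1 : Ω →ₘ[P] ℝ) =ᵐ[P] fun _ => (1:ℝ) :=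
  AEEqFun.coeFn_one

theorem zero_ae : ⇑(0 : Ω →ₘ[P] ℝ) =ᵐ[P] fun _ => (0:ℝ) :=
  AEEqFun.coeFn_zero

theorem aabs_ae (ξ : Ω →ₘ[P] ℝ) : ⇑(aabs ξ) =ᵐ[P] fun ω => |ξ ω| := by
  filter_upwards [AEEqFun.coeFn_sup ξ (-ξ), AEEqFun.coeFn_neg ξ] with ω h1 h2
  simp only [aabs]
  rw [h1, h2]
  simp [abs, max_comm]

theorem eq_of_ae {f g : Ω →ₘ[P] ℝ} (h : ∀ᵐ ω ∂P, f ω = g ω) : f = g :=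
  AEEqFun.ext h

theorem nonneg_ae {f : Ω →ₘ[P] ℝ} : 0 ≤ f ↔ ∀ᵐ ω ∂P, 0 ≤ f ω := by
  rw [le_ae]
  exact eventually_congr (zero_ae.mono fun ω h => by rw [h])

theorem le_one_ae {f : Ω →ₘ[P] ℝ} : f ≤ 1 ↔ ∀ᵐ ω ∂P, f ω ≤ 1 := by
  rw [le_ae]
  exact eventually_congr (one_ae.mono fun ω h => by rw [h])

theorem mul_nonneg' {f g : Ω →ₘ[P] ℝ} (hf : 0 ≤ f) (hg : 0 ≤ g) : 0 ≤ f * g := by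
  rw [nonneg_ae] at *
  filter_upwards [hf, hg, mul_ae f g] with ω h1 h2 h3
  rw [h3]; exact mul_nonneg h1 h2

theorem add_nonneg' {f g : Ω →ₘ[P] ℝ} (hf : 0 ≤ f) (hg : 0 ≤ g) : 0 ≤ f + g := by
  rw [nonneg_ae] at *
  filter_upwards [hf, hg, add_ae f g] with ω h1 h2 h3
  rw [h3]; exact add_nonneg h1 h2

theorem aabs_nonneg (ξ : Ω →ₘ[P] ℝ) : 0 ≤ aabs ξ := by
  rw [nonneg_ae]
  filter_upwards [aabs_ae ξ] with ω h
  rw [h]; exact abs_nonneg _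

theorem one_sub_nonneg {e : Ω →ₘ[P] ℝ} (he : e ≤ 1) : 0 ≤ 1 - e := by
  rw [le_one_ae] at he
  rw [nonneg_ae]
  filter_upwards [he, sub_ae 1 e, one_ae] with ω h1 h2 h3
  rw [h2, h3]; linarith

theorem mul_le_mul_left' {a b c : Ω →ₘ[P] ℝ} (hc : 0 ≤ c) (hab : a ≤ b) :
    c * a ≤ c * b := by
  rw [nonneg_ae] at hc
  rw [le_ae] at *
  filter_upwards [hc, hab, mul_ae c a, mul_ae c b] with ω h1 h2 h3 h4
  rw [h3, h4]; exact mul_le_mul_of_nonneg_left h2 h1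

theorem sub_le_iff_le_add' {a b c : Ω →ₘ[P] ℝ} : a - b ≤ c ↔ a ≤ b + c := by
  rw [le_ae, le_ae]
  constructor <;> intro h
  · filter_upwards [h, sub_ae a b, add_ae b c] with ω h1 h2 h3
    rw [h3]; rw [h2] at h1; linarith
  · filter_upwards [h, sub_ae a b, add_ae b c] with ω h1 h2 h3
    rw [h2]; rw [h3] at h1; linarith

theorem exists_sgn (ξ : Ω →ₘ[P] ℝ) : ∃ s : Ω →ₘ[P] ℝ, aabs s ≤ 1 ∧ s * aabs ξ = ξ := by
  refine ⟨mkL (fun ω => if ξ ω < 0 then -1 else 1)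
    (Measurable.ite (measurableSet_lt (AEEqFun.measurable ξ) measurable_const)
      measurable_const measurable_const), ?_, ?_⟩
  · rw [le_one_ae]
    filter_upwards [aabs_ae (mkL _ _), mkL_ae (fun ω => if ξ ω < 0 then -1 else 1) _]
      with ω h1 h2
    rw [h1, h2]; split_ifs <;> simp
  · apply eq_of_ae
    filter_upwards [mul_ae _ (aabs ξ), aabs_ae ξ,
      mkL_ae (fun ω => if ξ ω < 0 then -1 else 1) _] with ω h1 h2 h3
    rw [h1, h2, h3]
    split_ifs with h
    · rw [abs_of_neg h]; ring
    · rw [abs_of_nonneg (not_lt.1 h)]; ring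

end Statement4Aux
namespace Statement4Aux

open MeasureTheory PaperL0 Set Pointwise

variable {Ω : Type*} [MeasurableSpace Ω] {P : Measure Ω}

private theorem measEq (ξ : Ω →ₘ[P] ℝ) : MeasurableSet {ω | ξ ω = 0} :=
  measurableSet_eq_fun (AEEqFun.measurable ξ) measurable_const

/-- indicator of the support of ξ -/
def eof (ξ : Ω →ₘ[P] ℝ) : Ω →ₘ[P] ℝ :=
  mkL (fun ω => if ξ ω = 0 then 0 else 1)
    (Measurable.ite (measEq ξ) measurable_const measurable_const)

/-- invertible modification of ξ -/
def tof (ξ : Ω →ₘ[P] ℝ) : Ω →ₘ[P] ℝ :=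
  mkL (fun ω => if ξ ω = 0 then 1 else ξ ω)
    (Measurable.ite (measEq ξ) measurable_const (AEEqFun.measurable ξ))

/-- inverse of `tof ξ` -/
def tinvof (ξ : Ω →ₘ[P] ℝ) : Ω →ₘ[P] ℝ :=
  mkL (fun ω => if ξ ω = 0 then 1 else (ξ ω)⁻¹)
    (Measurable.ite (measEq ξ) measurable_const (AEEqFun.measurable ξ).inv)

theorem eof_ae (ξ : Ω →ₘ[P] ℝ) :
    ⇑(eof ξ) =ᵐ[P] fun ω => if ξ ω = 0 then 0 else 1 := mkL_ae _ _

theorem tof_ae (ξ : Ω →ₘ[P] ℝ) :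
    ⇑(tof ξ) =ᵐ[P] fun ω => if ξ ω = 0 then 1 else ξ ω := mkL_ae _ _

theorem tinvof_ae (ξ : Ω →ₘ[P] ℝ) :
    ⇑(tinvof ξ) =ᵐ[P] fun ω => if ξ ω = 0 then 1 else (ξ ω)⁻¹ := mkL_ae _ _

theorem eof_mul_tof (ξ : Ω →ₘ[P] ℝ) : eof ξ * tof ξ = ξ := by
  apply eq_of_ae
  filter_upwards [mul_ae (eof ξ) (tof ξ), eof_ae ξ, tof_ae ξ] with ω h1 h2 h3
  rw [h1, h2, h3]; split_ifs with h <;> simp [h]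

theorem tof_mul_tinv (ξ : Ω →ₘ[P] ℝ) : tof ξ * tinvof ξ = 1 := by
  apply eq_of_ae
  filter_upwards [mul_ae (tof ξ) (tinvof ξ), tof_ae ξ, tinvof_ae ξ, one_ae] with ω h1 h2 h3 h4
  rw [h1, h2, h3, h4]; split_ifs with h <;> simp [h]

theorem xi_mul_tinv (ξ : Ω →ₘ[P] ℝ) : ξ * tinvof ξ = eof ξ := by
  apply eq_of_ae
  filter_upwards [mul_ae ξ (tinvof ξ), tinvof_ae ξ, eof_ae ξ] with ω h1 h2 h3
  rw [h1, h2, h3]; split_ifs with h <;> simp [h]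

theorem aabs_mul_aabs_tinv (ξ : Ω →ₘ[P] ℝ) : aabs ξ * aabs (tinvof ξ) = eof ξ := by
  apply eq_of_ae
  filter_upwards [mul_ae (aabs ξ) (aabs (tinvof ξ)), aabs_ae ξ, aabs_ae (tinvof ξ),
    tinvof_ae ξ, eof_ae ξ] with ω h1 h2 h3 h4 h5
  rw [h1, h2, h3, h4, h5]; split_ifs with h
  · simp [h]
  · rw [abs_inv, mul_inv_cancel₀ (abs_ne_zero.2 h)]

theorem aabs_mul_one_sub_eof (ξ : Ω →ₘ[P] ℝ) : aabs ξ * (1 - eof ξ) = 0 := by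
  apply eq_of_ae
  filter_upwards [mul_ae (aabs ξ) (1 - eof ξ), aabs_ae ξ, sub_ae 1 (eof ξ), one_ae,
    eof_ae ξ, zero_ae] with ω h1 h2 h3 h4 h5 h6
  rw [h1, h2, h3, h4, h5, h6]; split_ifs with h <;> simp [h]

theorem eof_idem (ξ : Ω →ₘ[P] ℝ) : eof ξ * eof ξ = eof ξ := by
  apply eq_of_ae
  filter_upwards [mul_ae (eof ξ) (eof ξ), eof_ae ξ] with ω h1 h2
  rw [h1, h2]; split_ifs <;> simp

theorem eof_nonneg (ξ : Ω →ₘ[P] ℝ) : 0 ≤ eof ξ := by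
  rw [nonneg_ae]
  filter_upwards [eof_ae ξ] with ω h
  rw [h]; split_ifs <;> norm_num

theorem eof_le_one (ξ : Ω →ₘ[P] ℝ) : eof ξ ≤ 1 := by
  rw [le_one_ae]
  filter_upwards [eof_ae ξ] with ω h
  rw [h]; split_ifs <;> norm_num

theorem eof_zero_or_one (ξ : Ω →ₘ[P] ℝ) : ∀ᵐ ω ∂P, (eof ξ) ω = 0 ∨ (eof ξ) ω = 1 := by
  filter_upwards [eof_ae ξ] with ω h
  rw [h]; split_ifs <;> simp

theorem aabs_tof_mul_aabs_tinv (ξ : Ω →ₘ[P] ℝ) :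
    aabs (tof ξ) * aabs (tinvof ξ) = 1 := by
  apply eq_of_ae
  filter_upwards [mul_ae (aabs (tof ξ)) (aabs (tinvof ξ)), aabs_ae (tof ξ),
    aabs_ae (tinvof ξ), tof_ae ξ, tinvof_ae ξ, one_ae] with ω h1 h2 h3 h4 h5 h6
  rw [h1, h2, h3, h4, h5, h6]; split_ifs with h
  · norm_num
  · rw [abs_inv, mul_inv_cancel₀ (abs_ne_zero.2 h)]

theorem eof_mul_aabs_tof (ξ : Ω →ₘ[P] ℝ) : eof ξ * aabs (tof ξ) = aabs ξ := by
  apply eq_of_ae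
  filter_upwards [mul_ae (eof ξ) (aabs (tof ξ)), aabs_ae (tof ξ), aabs_ae ξ,
    eof_ae ξ, tof_ae ξ] with ω h1 h2 h3 h4 h5
  rw [h1, h2, h3, h4, h5]; split_ifs with h <;> simp [h]

end Statement4Aux
namespace Statement4Aux

open MeasureTheory PaperL0 Set Pointwise

variable {Ω : Type*} [MeasurableSpace Ω] {P : Measure Ω}
variable {E : Type*} [AddCommGroup E] [Module (Ω →ₘ[P] ℝ) E] {U : Set E}

theorem lspos_mem_lpos {ξ : Ω →ₘ[P] ℝ} (h : ξ ∈ Lspos P) : ξ ∈ Lpos P := by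
  have h' : ∀ᵐ ω ∂P, 0 < ξ ω := h
  show 0 ≤ ξ
  rw [nonneg_ae]
  exact h'.mono fun ω hω => le_of_lt hω

theorem mem_scale (hbal : IsL0Balanced P U) {x : E} {η : Ω →ₘ[P] ℝ}
    (hx : x ∈ η • U) (ζ : Ω →ₘ[P] ℝ) : ζ • x ∈ (aabs ζ * η) • U := by
  obtain ⟨u, hu, rfl⟩ := hx
  obtain ⟨s, hs1, hs2⟩ := exists_sgn ζ
  have hc : ζ * η = aabs ζ * η * s := by
    conv_lhs => rw [← hs2]
    ring
  have : ζ • η • u = (aabs ζ * η) • s • u := by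
    rw [smul_smul, smul_smul, hc]
  rw [this]
  exact Set.smul_mem_smul_set (hbal u hu s hs1)

variable {pU : E → Ω →ₘ[P] ℝ}

theorem S_nonempty (habs : IsL0Absorbent P U) (x : E) :
    ∃ η, η ∈ {ξ : Ω →ₘ[P] ℝ | ξ ∈ Lpos P ∧ x ∈ ξ • U} := by
  obtain ⟨ξ, hξ, hm⟩ := habs x
  exact ⟨ξ, lspos_mem_lpos hξ, hm⟩

theorem pU_nonneg (hpU : ∀ x : E, IsGLB {ξ : Ω →ₘ[P] ℝ | ξ ∈ Lpos P ∧ x ∈ ξ • U} (pU x))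
    (x : E) : 0 ≤ pU x :=
  (hpU x).2 fun _ hξ => hξ.1

theorem lb_smul (hconv : IsL0Convex P U) (habs : IsL0Absorbent P U)
    (hbal : IsL0Balanced P U)
    (hpU : ∀ x : E, IsGLB {ξ : Ω →ₘ[P] ℝ | ξ ∈ Lpos P ∧ x ∈ ξ • U} (pU x))
    (ξ : Ω →ₘ[P] ℝ) (x : E) {η : Ω →ₘ[P] ℝ}
    (hη : η ∈ {ζ : Ω →ₘ[P] ℝ | ζ ∈ Lpos P ∧ ξ • x ∈ ζ • U}) :
    aabs ξ * pU x ≤ η := by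
  obtain ⟨hη0, u, hu, hux⟩ := hη
  obtain ⟨η₀, hη₀0, u₀, hu₀, hux₀⟩ := S_nonempty habs x
  have hux' : η • u = ξ • x := hux
  have hux₀' : η₀ • u₀ = x := hux₀
  obtain ⟨s, hs1, hs2⟩ := exists_sgn (tinvof ξ)
  have he2 : eof ξ * eof ξ = eof ξ := eof_idem ξ
  -- the candidate element of S x
  have hθe : (aabs (tinvof ξ) * η * eof ξ + (1 - eof ξ) * η₀) * eof ξ
      = aabs (tinvof ξ) * η * eof ξ := by
    linear_combination (aabs (tinvof ξ) * η - η₀) * he2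
  have hθe' : (aabs (tinvof ξ) * η * eof ξ + (1 - eof ξ) * η₀) * (1 - eof ξ)
      = (1 - eof ξ) * η₀ := by
    linear_combination (η₀ - aabs (tinvof ξ) * η) * he2
  have hsu : s • u ∈ U := hbal u hu s hs1
  have hv : eof ξ • (s • u) + (1 - eof ξ) • u₀ ∈ U :=
    hconv _ hsu _ hu₀ (eof ξ) (eof_nonneg ξ) (eof_le_one ξ)
  have hcoeff : aabs (tinvof ξ) * η * eof ξ * s = eof ξ * tinvof ξ * η := by
    conv_rhs => rw [← hs2]
    ring
  have h2 : eof ξ * tinvof ξ * ξ = eof ξ := by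
    rw [mul_assoc, mul_comm (tinvof ξ) ξ, xi_mul_tinv, eof_idem]
  have hA : (aabs (tinvof ξ) * η * eof ξ * s) • u = (eof ξ * η₀) • u₀ := by
    rw [hcoeff]
    calc (eof ξ * tinvof ξ * η) • u = (eof ξ * tinvof ξ) • η • u := (smul_smul _ _ _).symm
      _ = (eof ξ * tinvof ξ) • (ξ • x) := by rw [hux']
      _ = (eof ξ * tinvof ξ * ξ) • x := smul_smul _ _ _
      _ = eof ξ • x := by rw [h2]
      _ = eof ξ • η₀ • u₀ := by rw [hux₀']
      _ = (eof ξ * η₀) • u₀ := smul_smul _ _ _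
  have hθv : (aabs (tinvof ξ) * η * eof ξ + (1 - eof ξ) * η₀) •
      (eof ξ • (s • u) + (1 - eof ξ) • u₀) = x := by
    simp only [smul_add, smul_smul]
    have hθes : (aabs (tinvof ξ) * η * eof ξ + (1 - eof ξ) * η₀) * (eof ξ * s)
        = aabs (tinvof ξ) * η * eof ξ * s := by
      rw [← mul_assoc, hθe]
    rw [hθes, hθe', hA, ← add_smul]
    have : eof ξ * η₀ + (1 - eof ξ) * η₀ = η₀ := by ring
    rw [this, hux₀']
  have hθ0 : 0 ≤ aabs (tinvof ξ) * η * eof ξ + (1 - eof ξ) * η₀ :=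
    add_nonneg' (mul_nonneg' (mul_nonneg' (aabs_nonneg _) hη0) (eof_nonneg ξ))
      (mul_nonneg' (one_sub_nonneg (eof_le_one ξ)) hη₀0)
  have hθS : (aabs (tinvof ξ) * η * eof ξ + (1 - eof ξ) * η₀)
      ∈ {ζ : Ω →ₘ[P] ℝ | ζ ∈ Lpos P ∧ x ∈ ζ • U} :=
    ⟨hθ0, Set.mem_smul_set.2 ⟨_, hv, hθv⟩⟩
  have hle : pU x ≤ aabs (tinvof ξ) * η * eof ξ + (1 - eof ξ) * η₀ := (hpU x).1 hθS
  have h3 : aabs ξ * pU x ≤ aabs ξ * (aabs (tinvof ξ) * η * eof ξ + (1 - eof ξ) * η₀) :=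
    mul_le_mul_left' (aabs_nonneg _) hle
  have h4 : aabs ξ * (aabs (tinvof ξ) * η * eof ξ + (1 - eof ξ) * η₀) = eof ξ * η := by
    have expand : aabs ξ * (aabs (tinvof ξ) * η * eof ξ + (1 - eof ξ) * η₀)
        = (aabs ξ * aabs (tinvof ξ)) * (η * eof ξ) + (aabs ξ * (1 - eof ξ)) * η₀ := by
      ring
    rw [expand, aabs_mul_aabs_tinv, aabs_mul_one_sub_eof]
    linear_combination η * he2
  have h5 : eof ξ * η ≤ η := by
    rw [le_ae]
    filter_upwards [mul_ae (eof ξ) η, eof_ae ξ, nonneg_ae.1 hη0] with ω h1 h2 h3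
    rw [h1, h2]; split_ifs <;> simp [h3]
  calc aabs ξ * pU x ≤ aabs ξ * (aabs (tinvof ξ) * η * eof ξ + (1 - eof ξ) * η₀) := h3
    _ = eof ξ * η := h4
    _ ≤ η := h5

end Statement4Aux
namespace Statement4Aux

open MeasureTheory PaperL0 Set Pointwise

variable {Ω : Type*} [MeasurableSpace Ω] {P : Measure Ω}
variable {E : Type*} [AddCommGroup E] [Module (Ω →ₘ[P] ℝ) E] {U : Set E}
variable {pU : E → Ω →ₘ[P] ℝ}

theorem homog_ge (hconv : IsL0Convex P U) (habs : IsL0Absorbent P U)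
    (hbal : IsL0Balanced P U)
    (hpU : ∀ x : E, IsGLB {ξ : Ω →ₘ[P] ℝ | ξ ∈ Lpos P ∧ x ∈ ξ • U} (pU x))
    (ξ : Ω →ₘ[P] ℝ) (x : E) : aabs ξ * pU x ≤ pU (ξ • x) :=
  (hpU (ξ • x)).2 fun _ hη => lb_smul hconv habs hbal hpU ξ x hη

theorem pU_ind_le (habs : IsL0Absorbent P U) (hbal : IsL0Balanced P U)
    (hpU : ∀ x : E, IsGLB {ξ : Ω →ₘ[P] ℝ | ξ ∈ Lpos P ∧ x ∈ ξ • U} (pU x))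
    {e : Ω →ₘ[P] ℝ} (he : ∀ᵐ ω ∂P, e ω = 0 ∨ e ω = 1) (y : E) :
    pU (e • y) ≤ e * pU y := by
  have he0 : 0 ≤ e := by
    rw [nonneg_ae]; filter_upwards [he] with ω h
    rcases h with h | h <;> rw [h] <;> norm_num
  have he1 : e ≤ 1 := by
    rw [le_one_ae]; filter_upwards [he] with ω h
    rcases h with h | h <;> rw [h] <;> norm_num
  have habse : aabs e = e := by
    apply eq_of_ae
    filter_upwards [aabs_ae e, he] with ω h1 h2
    rw [h1]; rcases h2 with h | h <;> rw [h] <;> norm_num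
  have hstep : ∀ η ∈ {ξ : Ω →ₘ[P] ℝ | ξ ∈ Lpos P ∧ y ∈ ξ • U}, pU (e • y) ≤ e * η := by
    intro η hη
    have hmem : e • y ∈ (aabs e * η) • U := mem_scale hbal hη.2 e
    rw [habse] at hmem
    exact (hpU (e • y)).1 ⟨mul_nonneg' he0 hη.1, hmem⟩
  have hlb : pU (e • y) ≤ pU y := by
    refine (hpU y).2 fun η hη => le_trans (hstep η hη) ?_
    rw [le_ae]
    filter_upwards [mul_ae e η, he, nonneg_ae.1 hη.1] with ω h1 h2 h3
    rw [h1]; rcases h2 with h | h <;> rw [h] <;> simp [h3]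
  obtain ⟨η₀, hη₀⟩ := S_nonempty habs y
  have hfix : pU (e • y) = e * pU (e • y) := by
    apply eq_of_ae
    filter_upwards [le_ae.1 (hstep η₀ hη₀), nonneg_ae.1 (pU_nonneg hpU (e • y)), he,
      mul_ae e (pU (e • y)), mul_ae e η₀] with ω h1 h2 h3 h4 h5
    rw [h4]
    rcases h3 with h | h
    · rw [h5, h] at h1; rw [h]; simp; linarith
    · rw [h]; ring
  rw [hfix]
  exact mul_le_mul_left' he0 hlb

theorem homog (hconv : IsL0Convex P U) (habs : IsL0Absorbent P U)
    (hbal : IsL0Balanced P U)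
    (hpU : ∀ x : E, IsGLB {ξ : Ω →ₘ[P] ℝ | ξ ∈ Lpos P ∧ x ∈ ξ • U} (pU x))
    (ξ : Ω →ₘ[P] ℝ) (x : E) : pU (ξ • x) = aabs ξ * pU x := by
  refine le_antisymm ?_ (homog_ge hconv habs hbal hpU ξ x)
  have hxe : ξ • x = eof ξ • (tof ξ • x) := by
    rw [smul_smul, eof_mul_tof]
  have h1 : pU (ξ • x) ≤ eof ξ * pU (tof ξ • x) := by
    rw [hxe]
    exact pU_ind_le habs hbal hpU (eof_zero_or_one ξ) _
  have h2 : aabs (tinvof ξ) * pU (tof ξ • x) ≤ pU x := by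
    have h := homog_ge hconv habs hbal hpU (tinvof ξ) (tof ξ • x)
    rwa [smul_smul, mul_comm (tinvof ξ) (tof ξ), tof_mul_tinv, one_smul] at h
  have h3 : pU (tof ξ • x) ≤ aabs (tof ξ) * pU x := by
    have h := mul_le_mul_left' (aabs_nonneg (tof ξ)) h2
    rwa [← mul_assoc, aabs_tof_mul_aabs_tinv, one_mul] at h
  calc pU (ξ • x) ≤ eof ξ * pU (tof ξ • x) := h1
    _ ≤ eof ξ * (aabs (tof ξ) * pU x) := mul_le_mul_left' (eof_nonneg ξ) h3
    _ = aabs ξ * pU x := by rw [← mul_assoc, eof_mul_aabs_tof]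

theorem triangle_mem (hconv : IsL0Convex P U) {x y : E} {η η' : Ω →ₘ[P] ℝ}
    (hη : η ∈ {ξ : Ω →ₘ[P] ℝ | ξ ∈ Lpos P ∧ x ∈ ξ • U})
    (hη' : η' ∈ {ξ : Ω →ₘ[P] ℝ | ξ ∈ Lpos P ∧ y ∈ ξ • U}) :
    η + η' ∈ {ξ : Ω →ₘ[P] ℝ | ξ ∈ Lpos P ∧ x + y ∈ ξ • U} := by
  obtain ⟨hη0, u, hu, hux⟩ := hη
  obtain ⟨hη'0, v, hv, hyv⟩ := hη'
  have hux' : η • u = x := hux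
  have hyv' : η' • v = y := hyv
  set lam : Ω →ₘ[P] ℝ := mkL (fun ω => if η ω + η' ω ≤ 0 then 0 else η ω / (η ω + η' ω))
    (Measurable.ite
      (measurableSet_le ((AEEqFun.measurable η).add (AEEqFun.measurable η')) measurable_const)
      measurable_const
      ((AEEqFun.measurable η).div ((AEEqFun.measurable η).add (AEEqFun.measurable η'))))
    with hlam
  have hlam_ae : ⇑lam =ᵐ[P] fun ω => if η ω + η' ω ≤ 0 then 0 else η ω / (η ω + η' ω) :=
    mkL_ae _ _
  have hl0 : 0 ≤ lam := by
    rw [nonneg_ae]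
    filter_upwards [hlam_ae, nonneg_ae.1 hη0, nonneg_ae.1 hη'0] with ω h1 h2 h3
    rw [h1]; split_ifs with h
    · exact le_refl 0
    · exact div_nonneg h2 (by linarith [not_le.1 h])
  have hl1 : lam ≤ 1 := by
    rw [le_one_ae]
    filter_upwards [hlam_ae, nonneg_ae.1 hη0, nonneg_ae.1 hη'0] with ω h1 h2 h3
    rw [h1]; split_ifs with h
    · norm_num
    · exact div_le_one_of_le₀ (by linarith) (by linarith [not_le.1 h])
  have hmul : lam * (η + η') = η := by
    apply eq_of_ae
    filter_upwards [mul_ae lam (η + η'), add_ae η η', hlam_ae, nonneg_ae.1 hη0,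
      nonneg_ae.1 hη'0] with ω h1 h2 h3 h4 h5
    rw [h1, h2, h3]; split_ifs with h
    · have : η ω = 0 := le_antisymm (by linarith) h4
      simp [this]
    · exact div_mul_cancel₀ _ (by linarith [not_le.1 h] : η ω + η' ω ≠ 0)
  have hmul' : (1 - lam) * (η + η') = η' := by
    linear_combination -hmul
  have hw : lam • u + (1 - lam) • v ∈ U := hconv u hu v hv lam hl0 hl1
  have hsm : (η + η') • (lam • u + (1 - lam) • v) = x + y := by
    rw [smul_add, smul_smul, smul_smul, mul_comm (η + η') lam, hmul,
      mul_comm (η + η') (1 - lam), hmul', hux', hyv']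
  exact ⟨add_nonneg' hη0 hη'0, Set.mem_smul_set.2 ⟨_, hw, hsm⟩⟩

theorem triangle (hconv : IsL0Convex P U) (habs : IsL0Absorbent P U)
    (hpU : ∀ x : E, IsGLB {ξ : Ω →ₘ[P] ℝ | ξ ∈ Lpos P ∧ x ∈ ξ • U} (pU x))
    (x y : E) : pU (x + y) ≤ pU x + pU y := by
  have key : ∀ η' ∈ {ξ : Ω →ₘ[P] ℝ | ξ ∈ Lpos P ∧ y ∈ ξ • U},
      pU (x + y) - pU x ≤ η' := by
    intro η' hη'
    have h1 : ∀ η ∈ {ξ : Ω →ₘ[P] ℝ | ξ ∈ Lpos P ∧ x ∈ ξ • U},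
        pU (x + y) - η' ≤ η := by
      intro η hη
      have h := (hpU (x + y)).1 (triangle_mem hconv hη hη')
      rw [sub_le_iff_le_add', add_comm η' η]
      exact h
    have h2 : pU (x + y) - η' ≤ pU x := (hpU x).2 h1
    rw [sub_le_iff_le_add'] at h2 ⊢
    exact le_trans h2 (le_of_eq (add_comm _ _))
  have h3 : pU (x + y) - pU x ≤ pU y := (hpU y).2 key
  rwa [sub_le_iff_le_add'] at h3

end Statement4Aux
namespace Statement4Aux

open MeasureTheory PaperL0 Set Pointwise

variable {Ω : Type*} [MeasurableSpace Ω] {P : Measure Ω}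
variable {E : Type*} [AddCommGroup E] [Module (Ω →ₘ[P] ℝ) E] {U : Set E}
variable {pU : E → Ω →ₘ[P] ℝ}

def constL (r : ℝ) : Ω →ₘ[P] ℝ := mkL (fun _ => r) measurable_const

theorem constL_ae (r : ℝ) : ⇑(constL r : Ω →ₘ[P] ℝ) =ᵐ[P] fun _ => r := mkL_ae _ _

theorem plus_const_mem (hbal : IsL0Balanced P U) {x : E} {η : Ω →ₘ[P] ℝ}
    (hη : η ∈ {ξ : Ω →ₘ[P] ℝ | ξ ∈ Lpos P ∧ x ∈ ξ • U}) {r : ℝ} (hr : 0 < r) :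
    η + constL r ∈ {ξ : Ω →ₘ[P] ℝ | ξ ∈ Lspos P ∧ x ∈ ξ • U} := by
  obtain ⟨hη0, u, hu, hux⟩ := hη
  have hux' : η • u = x := hux
  have hpos' : ∀ᵐ ω ∂P, 0 < (η + constL r : Ω →ₘ[P] ℝ) ω := by
    filter_upwards [add_ae η (constL r), constL_ae (P := P) r, nonneg_ae.1 hη0]
      with ω h1 h2 h3
    rw [h1, h2]; linarith
  have hpos : η + constL r ∈ Lspos P := hpos'
  set lam : Ω →ₘ[P] ℝ := mkL (fun ω => if η ω < 0 then 0 else η ω / (η ω + r))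
    (Measurable.ite (measurableSet_lt (AEEqFun.measurable η) measurable_const)
      measurable_const
      ((AEEqFun.measurable η).div ((AEEqFun.measurable η).add measurable_const)))
    with hlamdef
  have hlam_ae : ⇑lam =ᵐ[P] fun ω => if η ω < 0 then 0 else η ω / (η ω + r) := mkL_ae _ _
  have hlam1 : aabs lam ≤ 1 := by
    rw [le_one_ae]
    filter_upwards [aabs_ae lam, hlam_ae] with ω h1 h2
    rw [h1, h2]; split_ifs with h
    · norm_num
    · have h0 : 0 ≤ η ω := not_lt.1 h
      rw [abs_of_nonneg (div_nonneg h0 (by linarith))]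
      exact div_le_one_of_le₀ (by linarith) (by linarith)
  have hmul : lam * (η + constL r) = η := by
    apply eq_of_ae
    filter_upwards [mul_ae lam (η + constL r), add_ae η (constL r), constL_ae (P := P) r,
      hlam_ae, nonneg_ae.1 hη0] with ω h1 h2 h3 h4 h5
    rw [h1, h2, h3, h4]; split_ifs with h
    · exact absurd h5 (not_le.2 h)
    · exact div_mul_cancel₀ _ (by linarith : η ω + r ≠ 0)
  refine ⟨hpos, Set.mem_smul_set.2 ⟨lam • u, hbal u hu lam hlam1, ?_⟩⟩
  rw [smul_smul, mul_comm (η + constL r) lam, hmul, hux']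

theorem part2 (hbal : IsL0Balanced P U) (habs : IsL0Absorbent P U)
    (hpU : ∀ x : E, IsGLB {ξ : Ω →ₘ[P] ℝ | ξ ∈ Lpos P ∧ x ∈ ξ • U} (pU x)) (x : E) :
    IsGLB {ξ : Ω →ₘ[P] ℝ | ξ ∈ Lspos P ∧ x ∈ ξ • U} (pU x) := by
  constructor
  · intro ξ hξ
    exact (hpU x).1 ⟨lspos_mem_lpos hξ.1, hξ.2⟩
  · intro b hb
    refine (hpU x).2 fun η hη => ?_
    have hn : ∀ n : ℕ, b ≤ η + constL (1 / ((n : ℝ) + 1)) := fun n =>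
      hb (plus_const_mem hbal hη (by positivity))
    have h' : ∀ᵐ ω ∂P, ∀ n : ℕ, b ω ≤ η ω + 1 / ((n : ℝ) + 1) := by
      rw [ae_all_iff]
      intro n
      filter_upwards [le_ae.1 (hn n), add_ae η (constL (1 / ((n : ℝ) + 1))),
        constL_ae (P := P) (1 / ((n : ℝ) + 1))] with ω h1 h2 h3
      rw [h2, h3] at h1
      exact h1
    rw [le_ae]
    filter_upwards [h'] with ω h
    refine le_of_forall_pos_le_add fun ε hε => ?_
    obtain ⟨n, hn'⟩ := exists_nat_one_div_lt hε
    exact le_trans (h n) (by linarith)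

end Statement4Aux

open Statement4Aux in
/-- If U is L⁰-convex, L⁰-absorbent and L⁰-balanced, then its random gauge function p_U
is an L⁰-seminorm, and p_U x is also the greatest lower bound of {ξ ∈ L⁰₊₊ : x ∈ ξU}. -/
theorem statement4
    {Ω : Type*} [MeasurableSpace Ω] (P : Measure Ω) [IsProbabilityMeasure P]
    {E : Type*} [AddCommGroup E] [Module (Ω →ₘ[P] ℝ) E]
    (U : Set E)
    (hconv : IsL0Convex P U) (habs : IsL0Absorbent P U) (hbal : IsL0Balanced P U)
    (pU : E → Ω →ₘ[P] ℝ)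
    (hpU : ∀ x : E, IsGLB {ξ : Ω →ₘ[P] ℝ | ξ ∈ Lpos P ∧ x ∈ ξ • U} (pU x)) :
    IsL0Seminorm P pU ∧
      ∀ x : E, IsGLB {ξ : Ω →ₘ[P] ℝ | ξ ∈ Lspos P ∧ x ∈ ξ • U} (pU x) := by
  refine ⟨⟨pU_nonneg hpU, fun ξ x => homog hconv habs hbal hpU ξ x,
    fun x y => triangle hconv habs hpU x y⟩, fun x => part2 hbal habs hpU x⟩
end
end

section
/- In the counterexample setting, for every ε ∈ L⁰₊₊ and every x ∈ E = L⁰, the constant 0 is the greatest lower bound in (L⁰, ≤) of the set {ξ ∈ L⁰₊₊ : x ∈ ξ·U_ε}; that is, the random gauge function of U_ε is identically zero: p_{U_ε}(x) = 0 for all x ∈ E. -/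
noncomputable section

open Set Pointwise Filter Topology

namespace PaperSeq

/-- In the counterexample setting, Ω = ℕ (the positive integers), 𝔉 = 2^Ω and
P({j}) = 2^{-j}; since every singleton has positive probability, L⁰(𝔉, ℝ) is identified
with the ring `ℕ → ℝ` of all real sequences with pointwise operations and pointwise order. -/
abbrev Seq : Type := ℕ → ℝ

/-- `Ĩ_{{j}}`, the indicator of the singleton {j}. -/
def e (j : ℕ) : Seq := Set.indicator {j} (fun _ => (1 : ℝ))

/-- `M = span_{L⁰}{Ĩ_{{j}} : j ∈ Ω}`, the L⁰-submodule of E = L⁰ generated by the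
indicators of singletons. -/
def Mfin : Submodule Seq Seq := Submodule.span Seq (Set.range e)

/-- `L⁰₊₊ = {ξ : ξ(j) > 0 for all j}`. -/
def Lpp : Set Seq := {ξ | ∀ j, 0 < ξ j}

/-- `B_ε = {x ∈ L⁰ : |x| ≤ ε}`. -/
def Bball (ε : Seq) : Set Seq := {x | ∀ j, |x j| ≤ ε j}

/-- `U_ε = M + B_ε`. -/
def Uball (ε : Seq) : Set Seq := (Mfin : Set Seq) + Bball ε

/-- An L⁰-seminorm on an L⁰-module F, in the counterexample setting where L⁰ = ℕ → ℝ. -/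
structure IsSeqSeminorm {F : Type*} [AddCommGroup F] [Module Seq F] (p : F → Seq) : Prop where
  nonneg : ∀ x, 0 ≤ p x
  homog : ∀ (ξ : Seq) (x : F), p (ξ • x) = (fun j => |ξ j|) * p x
  triangle : ∀ x y, p (x + y) ≤ p x + p y

end PaperSeq

open PaperSeq

/-- Key construction: for any `x`, `j`, `t > 0`, there is `ξ ∈ Lpp` with `ξ j = t`
and `x ∈ ξ • Uball ε`. -/
lemma key (ε : Seq) (hε : ε ∈ Lpp) (x : Seq) (j : ℕ) (t : ℝ) (ht : 0 < t) :
    ∃ ξ : Seq, ξ ∈ Lpp ∧ ξ j = t ∧ x ∈ ξ • Uball ε := by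
  set ξ : Seq := fun k => if k = j then t else |x k| / ε k + 1 with hξ
  have hpos : ∀ k, 0 < ξ k := by
    intro k
    by_cases h : k = j
    · simp [hξ, h, ht]
    · simp only [hξ, if_neg h]
      have := hε k
      positivity
  refine ⟨ξ, hpos, by simp [hξ], ?_⟩
  set u : Seq := fun k => x k / ξ k with hu
  have hxu : ξ • u = x := by
    funext k
    simp only [Pi.smul_apply', smul_eq_mul, hu]
    exact mul_div_cancel₀ _ (hpos k).ne'
  refine Set.mem_smul_set.mpr ⟨u, ?_, hxu⟩
  refine Set.mem_add.mpr ⟨u j • e j, ?_, u - u j • e j, ?_, by abel⟩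
  · exact Submodule.smul_mem _ _ (Submodule.subset_span ⟨j, rfl⟩)
  · intro k
    by_cases h : k = j
    · subst h
      simp [e, Set.indicator, abs_nonneg, (hε k).le]
    · have hek : e j k = 0 := by
        simp [e, Set.indicator, h]
      have hξk : ξ k = |x k| / ε k + 1 := by simp [hξ, h]
      simp only [Pi.sub_apply, Pi.smul_apply, smul_eq_mul, hek, mul_zero, sub_zero]
      have hεk := hε k
      rw [hu]
      rw [abs_div, abs_of_pos (hpos k), div_le_iff₀ (hpos k), hξk]
      have : |x k| ≤ ε k * (|x k| / ε k) := by
        rw [mul_div_cancel₀ _ hεk.ne']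
      nlinarith [abs_nonneg (x k), hεk]


/-- In the counterexample setting, the random gauge function of U_ε is identically zero:
for every ε ∈ L⁰₊₊ and x ∈ E, 0 is the greatest lower bound of {ξ ∈ L⁰₊₊ : x ∈ ξ·U_ε}
(and also of {ξ ∈ L⁰₊ : x ∈ ξ·U_ε}, i.e. p_{U_ε}(x) = 0). -/
theorem statement6 (ε : Seq) (hε : ε ∈ Lpp) (x : Seq) :
    IsGLB {ξ : Seq | ξ ∈ Lpp ∧ x ∈ ξ • Uball ε} 0 ∧
    IsGLB {ξ : Seq | 0 ≤ ξ ∧ x ∈ ξ • Uball ε} 0 := by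
  
  have lb : ∀ b : Seq, (∀ ξ : Seq, (ξ ∈ Lpp ∧ x ∈ ξ • Uball ε) → b ≤ ξ) → b ≤ 0 := by
    intro b hb
    intro j
    show b j ≤ 0
    have h0 : ∀ t : ℝ, 0 < t → b j ≤ t := by
      intro t ht
      obtain ⟨ξ, hξpp, hξj, hξmem⟩ := key ε hε x j t ht
      have := hb ξ ⟨hξpp, hξmem⟩ j
      rwa [hξj] at this
    by_contra h
    push_neg at h
    have := h0 (b j / 2) (by linarith)
    linarith
  constructor
  · constructor
    · intro ξ hξ j
      exact (hξ.1 j).le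
    · intro b hb
      exact lb b (fun ξ hξ => hb hξ)
  · constructor
    · intro ξ hξ
      exact hξ.1
    · intro b hb
      refine lb b (fun ξ hξ => hb ⟨fun j => (hξ.1 j).le, hξ.2⟩)
end
end

section
/- In the counterexample setting, let x ∈ L⁰ with x ∉ M, let S = {j ∈ Ω : x(j) ≠ 0}, and define ε ∈ L⁰ by ε(j) = |x(j)|/2 for j ∈ S and ε(j) = 1 for j ∉ S. Then S is infinite, ε ∈ L⁰₊₊, and x ∉ M + B_ε. Consequently, ⋂_{ε ∈ L⁰₊₊} (M + B_ε) = M. -/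
noncomputable section

open Set Pointwise Filter Topology

open PaperSeq

lemma PaperSeq.mem_Mfin_iff (f : Seq) : f ∈ Mfin ↔ {j | f j ≠ 0}.Finite := by
  constructor
  · intro hf
    induction hf using Submodule.span_induction with
    | mem g hg =>
      obtain ⟨j, rfl⟩ := hg
      exact (Set.finite_singleton j).subset (fun k hk => by
        by_contra h
        exact hk (Set.indicator_of_notMem (by simpa using h) _))
    | zero => simpa using Set.finite_empty
    | add g h _ _ hg hh =>
      refine (hg.union hh).subset (fun k hk => ?_)
      by_contra h'
      simp only [Set.mem_union, Set.mem_setOf_eq, not_or, not_not] at h'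
      exact hk (by simp [h'.1, h'.2])
    | smul ξ g _ hg =>
      refine hg.subset (fun k hk => ?_)
      by_contra h'
      simp only [Set.mem_setOf_eq, not_not] at h'
      exact hk (by simp [h'])
  · intro hf
    have : f = ∑ j ∈ hf.toFinset, f • e j := by
      funext k
      simp only [Finset.sum_apply, Pi.smul_apply, smul_eq_mul, e]
      by_cases hk : f k = 0
      · simp [hk]
      · rw [Finset.sum_eq_single k]
        · simp
        · intro j _ hj
          simp [Ne.symm hj]
        · intro h
          exact absurd (hf.mem_toFinset.2 hk) h
    rw [this]
    exact Submodule.sum_mem _ fun j _ =>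
      Submodule.smul_mem _ _ (Submodule.subset_span ⟨j, rfl⟩)

lemma PaperSeq.eps_mem_Lpp (y : Seq) :
    (fun j => if y j ≠ 0 then |y j| / 2 else 1) ∈ Lpp := by
  intro j
  by_cases h : y j = 0
  · simp [h]
  · simp only [h, ne_eq, not_false_iff, if_true]
    positivity

lemma PaperSeq.not_mem_Uball (y : Seq) (hy : y ∉ Mfin) :
    y ∉ (Mfin : Set Seq) + Bball (fun j => if y j ≠ 0 then |y j| / 2 else 1) := by
  have hSinf : {j : ℕ | y j ≠ 0}.Infinite := by
    intro hfin
    exact hy ((mem_Mfin_iff y).2 hfin)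
  rintro ⟨m, hm, b, hb, hmb⟩
  have hmfin : {j | m j ≠ 0}.Finite := (mem_Mfin_iff m).1 hm
  obtain ⟨j, hjS, hjm⟩ := (hSinf.diff hmfin).nonempty
  simp only [Set.mem_setOf_eq, Set.mem_diff, not_not] at hjS hjm
  have hbj : b j = y j := by
    have := congrFun hmb j
    simp only [Pi.add_apply] at this
    rw [← this, hjm]; ring
  have hle := hb j
  rw [hbj] at hle
  simp only [hjS, ne_eq, not_false_iff, if_true] at hle
  have : 0 < |y j| := abs_pos.2 hjS
  linarith


/-- If x ∉ M then its support S is infinite, ε (equal to |x|/2 on S and 1 off S) is in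
L⁰₊₊, and x ∉ M + B_ε; consequently ⋂_{ε ∈ L⁰₊₊} (M + B_ε) = M. -/
theorem statement7 (x : Seq) (hx : x ∉ Mfin) :
    {j : ℕ | x j ≠ 0}.Infinite ∧
    (fun j => if x j ≠ 0 then |x j| / 2 else 1) ∈ Lpp ∧
    x ∉ (Mfin : Set Seq) + Bball (fun j => if x j ≠ 0 then |x j| / 2 else 1) ∧
    (⋂ ε ∈ Lpp, ((Mfin : Set Seq) + Bball ε)) = (Mfin : Set Seq) := by
  refine ⟨fun hfin => hx ((mem_Mfin_iff x).2 hfin), eps_mem_Lpp x, not_mem_Uball x hx, ?_⟩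
  ext y
  simp only [Set.mem_iInter, SetLike.mem_coe]
  constructor
  · intro hy
    by_contra hyM
    exact not_mem_Uball y hyM (hy _ (eps_mem_Lpp y))
  · intro hy ε hε
    exact ⟨y, hy, 0, fun j => by simpa using (hε j).le, by simp⟩
end
end

section
/- In the counterexample setting, if p is an L⁰-seminorm on E = L⁰ such that U_ε ⊆ {x ∈ E : p(x) ≤ 1} for some ε ∈ L⁰₊₊, then p is identically zero: p(x) = 0 for all x ∈ E. -/
noncomputable section

open Set Pointwise Filter Topology

open PaperSeq

/-- If p is an L⁰-seminorm on E = L⁰ with U_ε ⊆ {x : p x ≤ 1} for some ε ∈ L⁰₊₊, then p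
is identically zero. -/
theorem statement9 (p : Seq → Seq) (hp : IsSeqSeminorm p)
    (ε : Seq) (hε : ε ∈ Lpp) (h : Uball ε ⊆ {x : Seq | p x ≤ 1}) :
    ∀ x : Seq, p x = 0 := by
  intro x
  funext k
  simp only [Pi.zero_apply]
  have hnn : 0 ≤ p x k := hp.nonneg x k
  have key : ∀ N : ℝ, 0 < N → N * p x k ≤ 1 := by
    intro N hN
    set ξ : Seq := fun j => if j = k then N else ε j / (1 + |x j|) with hξ
    have hmem : ξ • x ∈ Uball ε := by
      have heq : (ξ k * x k) • e k + (ξ • x - (ξ k * x k) • e k) = ξ • x := by ring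
      rw [← heq]
      refine Set.add_mem_add ?_ ?_
      · exact Submodule.smul_mem _ _ (Submodule.subset_span ⟨k, rfl⟩)
      · intro j
        by_cases hj : j = k
        · subst hj
          have hek : e j j = 1 := by simp [e]
          have : (ξ • x - (ξ j * x j) • e j) j = 0 := by
            simp [Pi.smul_apply, hek, smul_eq_mul]
          rw [this]
          simpa using (hε j).le
        · have hek : e k j = 0 := by simp [e, hj]
          have hval : (ξ • x - (ξ k * x k) • e k) j = ξ j * x j := by
            simp [Pi.smul_apply, hek, smul_eq_mul]
          rw [hval, hξ]
          simp only [if_neg hj]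
          rw [abs_mul, abs_div]
          have h1 : (0:ℝ) < 1 + |x j| := by positivity
          have h2 : |ε j| = ε j := abs_of_pos (hε j)
          have h3 : abs (1 + |x j|) = 1 + |x j| := abs_of_pos h1
          rw [h2, h3, div_mul_eq_mul_div, div_le_iff₀ h1]
          have : |x j| ≤ 1 + |x j| := by linarith [abs_nonneg (x j)]
          calc ε j * |x j| ≤ ε j * (1 + |x j|) := by
                exact mul_le_mul_of_nonneg_left this (hε j).le
            _ = ε j * (1 + |x j|) := rfl
    have hle := h hmem k
    have hhom := congrFun (hp.homog ξ x) k
    simp only [Pi.mul_apply] at hhom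
    rw [hhom] at hle
    simp only [Set.mem_setOf_eq] at hle
    have : |ξ k| = N := by rw [hξ]; simp [abs_of_pos hN]
    rw [this] at hle
    exact hle
  by_contra hne
  have hpos : 0 < p x k := lt_of_le_of_ne hnn (Ne.symm hne)
  have := key (2 / p x k) (by positivity)
  rw [div_mul_cancel₀ 2 (ne_of_gt hpos)] at this
  linarith
end
end

section
/- In the counterexample setting, the locally L⁰-convex topology 𝒯 on E = L⁰ is not induced by any family of L⁰-seminorms: there is no family 𝒫 of L⁰-seminorms on L⁰ whose induced topology equals 𝒯. -/
noncomputable section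

open Set Pointwise Filter Topology

open PaperSeq

lemma mem_Mfin_finite {x : Seq} (hx : x ∈ Mfin) : {j | x j ≠ 0}.Finite := by
  induction hx using Submodule.span_induction with
  | mem x h =>
      obtain ⟨k, rfl⟩ := h
      exact (Set.finite_singleton k).subset (by
        intro j hj; simp only [mem_setOf_eq, e] at hj
        by_contra hc; simp_all [Set.indicator])
  | zero => simp
  | add x y _ _ hx hy =>
      exact (hx.union hy).subset (by
        intro j hj; simp only [mem_setOf_eq, Pi.add_apply] at hj
        by_contra hc
        simp only [Set.mem_union, mem_setOf_eq, not_or, not_not] at hc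
        simp [hc.1, hc.2] at hj)
  | smul ξ x _ hx =>
      exact hx.subset (by
        intro j hj; simp only [mem_setOf_eq, smul_eq_mul, Pi.mul_apply] at hj ⊢
        intro h; simp [h] at hj)

lemma seminorm_apply {p : Seq → Seq} (hp : IsSeqSeminorm p) (x : Seq) (j : ℕ) :
    p x j = |x j| * p (e j) j := by
  have h1 : e j • x = (fun _ => x j : Seq) • e j := by
    funext i
    simp only [smul_eq_mul, Pi.mul_apply]
    by_cases h : i = j
    · subst h; ring
    · simp [e, Set.indicator, Ne.symm h, h]
  have h2 := congrFun (hp.homog (e j) x) j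
  rw [h1, hp.homog (fun _ => x j) (e j)] at h2
  simp only [Pi.mul_apply] at h2
  have hej : e j j = 1 := by simp [e]
  rw [hej] at h2
  simpa using h2.symm

/-- The locally L⁰-convex topology 𝒯 of the counterexample is not induced by any family of
L⁰-seminorms on L⁰. -/
theorem statement10 (T : TopologicalSpace Seq)
    (hT : ∀ V : Set Seq, IsOpen[T] V ↔ ∀ y ∈ V, ∃ ε ∈ Lpp, ∀ u ∈ Uball ε, y + u ∈ V) :
    ¬ ∃ Ps : Set (Seq → Seq), (∀ p ∈ Ps, IsSeqSeminorm p) ∧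
      ∀ V : Set Seq, IsOpen[T] V ↔
        ∀ y ∈ V, ∃ Qs : Set (Seq → Seq), Qs.Finite ∧ Qs ⊆ Ps ∧
          ∃ ε ∈ Lpp, ∀ u : Seq, (∀ p ∈ Qs, p u ≤ ε) → y + u ∈ V := by
  rintro ⟨Ps, hPs, hiff⟩
  have hp0 : ∀ p ∈ Ps, p 0 = 0 := by
    intro p hp
    have h := (hPs p hp).homog 0 0
    simp only [smul_zero] at h
    rw [h]
    funext j
    simp
  -- Step 1: every seminorm in Ps vanishes on each e k
  have pe0 : ∀ p ∈ Ps, ∀ k, p (e k) = 0 := by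
    intro p hp k
    set V : Set Seq := {x | ∀ j, p x j < 1} with hV
    have hVopen : IsOpen[T] V := by
      rw [hiff]
      intro y hy
      refine ⟨{p}, Set.finite_singleton p, by simpa using hp,
        fun j => (1 - p y j) / 2, fun j => by have := hy j; simp only [mem_setOf_eq] at this ⊢; linarith, ?_⟩
      intro u hu j
      have ht := (hPs p hp).triangle y u j
      have h2 := hu p (Set.mem_singleton p) j
      have h3 := hy j
      simp only [Pi.add_apply] at ht
      calc p (y + u) j ≤ p y j + p u j := ht
        _ ≤ p y j + (1 - p y j) / 2 := by linarith
        _ < 1 := by linarith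
    obtain ⟨ε', hε', hU⟩ := (hT V).mp hVopen 0 (by
      intro j; rw [hp0 p hp]; norm_num)
    have key : ∀ t : ℝ, ((fun _ => t : Seq) • e k) ∈ Uball ε' := by
      intro t
      refine ⟨(fun _ => t : Seq) • e k,
        Submodule.smul_mem _ _ (Submodule.subset_span ⟨k, rfl⟩), 0, ?_, add_zero _⟩
      intro j; simp only [Pi.zero_apply, abs_zero]; exact (hε' j).le
    funext j
    by_contra hne
    have hpos : 0 < p (e k) j :=
      ((hPs p hp).nonneg (e k) j).lt_of_ne (Ne.symm (by simpa using hne))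
    set t := 2 / p (e k) j with hts
    have hV2 := hU _ (key t) j
    rw [zero_add] at hV2
    have hh := congrFun ((hPs p hp).homog (fun _ => t) (e k)) j
    simp only [Pi.mul_apply] at hh
    rw [hh] at hV2
    rw [abs_of_pos (by positivity)] at hV2
    rw [hts, div_mul_cancel₀ _ (ne_of_gt hpos)] at hV2
    linarith
  -- Step 2: hence every seminorm in Ps is identically zero
  have pzero : ∀ p ∈ Ps, ∀ x, p x = 0 := by
    intro p hp x
    funext j
    rw [seminorm_apply (hPs p hp) x j, pe0 p hp j]
    simp
  -- Step 3: the T-open set M + open unit ball is then the whole space: contradiction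
  set W : Set Seq := (Mfin : Set Seq) + {x : Seq | ∀ j, |x j| < 1} with hW
  have hWopen : IsOpen[T] W := by
    rw [hT]
    rintro y ⟨m, hm, b, hb, rfl⟩
    simp only [mem_setOf_eq] at hb
    refine ⟨fun j => (1 - |b j|) / 2, fun j => by have := hb j; linarith, ?_⟩
    rintro u ⟨m', hm', b', hb', rfl⟩
    refine ⟨m + m', Submodule.add_mem _ hm hm', b + b', ?_, by ring⟩
    intro j
    have h1 := hb j
    have h2 := hb' j
    simp only [Pi.add_apply]
    calc |b j + b' j| ≤ |b j| + |b' j| := abs_add_le _ _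
      _ < 1 := by linarith
  have h0W : (0 : Seq) ∈ W :=
    ⟨0, Submodule.zero_mem _, 0, by intro j; simp, by simp⟩
  obtain ⟨Qs, _, hQP, ε, hε, hball⟩ := (hiff W).mp hWopen 0 h0W
  have h2W : (fun _ => (2 : ℝ) : Seq) ∈ W := by
    have := hball (fun _ => 2) (fun p hp => by
      rw [pzero p (hQP hp)]; intro j; exact (hε j).le)
    simpa using this
  obtain ⟨m, hm, b, hb, hmb⟩ := h2W
  obtain ⟨j, hj⟩ := ((mem_Mfin_finite hm).infinite_compl).nonempty
  simp only [Set.mem_compl_iff, mem_setOf_eq, not_not] at hj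
  have := congrFun hmb j
  simp only [Pi.add_apply, hj, zero_add] at this
  have hbj := hb j
  rw [this] at hbj
  norm_num at hbj
end
end

section
/- In the counterexample setting, let E/M be the quotient L⁰-module, Π : E → E/M the quotient map, and 𝒯_Π the quotient topology on E/M coinduced by Π from 𝒯. Then (E/M, 𝒯_Π) is Hausdorff, and 𝒯_Π is not induced by any family of L⁰-seminorms on E/M. -/
noncomputable section

open Set Pointwise Filter Topology

open PaperSeq

section Aux

open Function Classical

lemma e_support (j : ℕ) : Function.support (e j) ⊆ {j} := by
  intro k hk
  simp only [Function.mem_support, e] at hk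
  by_contra h
  exact hk (Set.indicator_of_notMem (by simpa using h) _)

lemma finite_of_mem_Mfin {x : Seq} (hx : x ∈ Mfin) : (Function.support x).Finite := by
  induction hx using Submodule.span_induction with
  | mem y hy =>
    obtain ⟨j, rfl⟩ := hy
    exact (Set.finite_singleton j).subset (e_support j)
  | zero => simp
  | add y z _ _ hy hz => exact (hy.union hz).subset (Function.support_add _ _)
  | smul ξ y _ hy => exact hy.subset (Function.support_smul_subset_right ξ y)

lemma mem_Mfin_of_finite {x : Seq} (hx : (Function.support x).Finite) : x ∈ Mfin := by
  classical
  have hrep : x = ∑ j ∈ hx.toFinset, x • e j := by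
    funext k
    rw [Finset.sum_apply]
    have hterm : ∀ j ∈ hx.toFinset, (x • e j) k = if j = k then x k else 0 := by
      intro j _
      show x k * e j k = _
      rcases eq_or_ne j k with rfl | h
      · simp [e]
      · simp [e, Set.indicator_of_notMem, Ne.symm h, h]
    rw [Finset.sum_congr rfl hterm, Finset.sum_ite_eq' hx.toFinset k (fun _ => x k)]
    by_cases hk : k ∈ hx.toFinset
    · simp [hk]
    · rw [if_neg hk]
      have : x k = 0 := by
        by_contra h
        exact hk (hx.mem_toFinset.2 h)
      exact this
  rw [hrep]
  exact Submodule.sum_mem _ fun j _ =>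
    Submodule.smul_mem _ _ (Submodule.subset_span ⟨j, rfl⟩)

lemma mk_eq_mk_sub {a b : Seq}
    (h : (Submodule.Quotient.mk a : Seq ⧸ Mfin) = Submodule.Quotient.mk b) :
    b - a ∈ Mfin := by
  have h2 := (Submodule.Quotient.eq Mfin).1 h
  have := Submodule.neg_mem _ h2
  simpa using this

/-- Every L⁰-seminorm on the quotient `Seq ⧸ Mfin` vanishes identically. -/
lemma seminorm_eq_zero {p : (Seq ⧸ Mfin) → Seq} (hp : IsSeqSeminorm p)
    (u : Seq ⧸ Mfin) : p u = 0 := by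
  obtain ⟨x, rfl⟩ := Submodule.Quotient.mk_surjective Mfin u
  funext j
  set t : Seq := fun k => if j < k then 1 else 0 with ht
  have hmk : (Submodule.Quotient.mk (t • x) : Seq ⧸ Mfin) = Submodule.Quotient.mk x := by
    rw [Submodule.Quotient.eq]
    apply mem_Mfin_of_finite
    apply (Set.finite_Iic j).subset
    intro k hk
    simp only [Function.mem_support] at hk
    simp only [Set.mem_Iic]
    by_contra hkj
    push_neg at hkj
    apply hk
    show t k * x k - x k = 0
    rw [ht]
    simp [hkj]
  have h2 : p (Submodule.Quotient.mk x) =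
      (fun k => |t k|) * p (Submodule.Quotient.mk x) := by
    conv_lhs => rw [← hmk]
    rw [Submodule.Quotient.mk_smul, hp.homog]
  have h3 := congrFun h2 j
  simp only [Pi.mul_apply] at h3
  have htj : t j = 0 := by rw [ht]; simp
  rw [htj] at h3
  simpa using h3

/-- The strict slab around `x`, saturated with respect to `Mfin`. -/
def Sset (x ε : Seq) : Set Seq := {z | ∃ m ∈ Mfin, ∀ j, |z j - x j - m j| < ε j}

lemma self_mem_Sset {x ε : Seq} (hε : ε ∈ Lpp) : x ∈ Sset x ε :=
  ⟨0, Submodule.zero_mem _, fun j => by simpa using hε j⟩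

lemma Sset_sat {x ε z w : Seq} (hz : z ∈ Sset x ε) (hw : w - z ∈ Mfin) :
    w ∈ Sset x ε := by
  obtain ⟨m, hm, hb⟩ := hz
  refine ⟨m + (w - z), Submodule.add_mem _ hm hw, fun j => ?_⟩
  have heq : w j - x j - (m + (w - z)) j = z j - x j - m j := by
    simp only [Pi.add_apply, Pi.sub_apply]; ring
  rw [heq]; exact hb j

lemma Sset_open (T : TopologicalSpace Seq)
    (hT : ∀ V : Set Seq, IsOpen[T] V ↔ ∀ y ∈ V, ∃ ε ∈ Lpp, ∀ u ∈ Uball ε, y + u ∈ V)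
    {x ε : Seq} : IsOpen[T] (Sset x ε) := by
  rw [hT]
  rintro y ⟨m, hm, hb⟩
  refine ⟨fun j => (ε j - |y j - x j - m j|) / 2,
    fun j => div_pos (by linarith [hb j]) two_pos, ?_⟩
  rintro u hu
  rw [Uball, Set.mem_add] at hu
  obtain ⟨m', hm', b', hb', rfl⟩ := hu
  refine ⟨m + m', Submodule.add_mem _ hm hm', fun j => ?_⟩
  have h1 := hb j
  have h2 := hb' j
  have heq : (y + (m' + b')) j - x j - (m + m') j = (y j - x j - m j) + b' j := by
    simp only [Pi.add_apply]; ring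
  rw [heq]
  calc |(y j - x j - m j) + b' j| ≤ |y j - x j - m j| + |b' j| := abs_add_le _ _
    _ < ε j := by
        simp only [Pi.add_apply] at h2
        linarith

lemma preimage_image_Sset {x ε : Seq} :
    (Submodule.Quotient.mk : Seq → Seq ⧸ Mfin) ⁻¹'
      (Submodule.Quotient.mk '' Sset x ε) = Sset x ε := by
  ext z
  simp only [Set.mem_preimage, Set.mem_image]
  constructor
  · rintro ⟨s, hs, hmk⟩
    exact Sset_sat hs (mk_eq_mk_sub hmk)
  · intro hz; exact ⟨z, hz, rfl⟩

lemma images_disjoint {x x' ε ε' : Seq}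
    (hdisj : Sset x ε ∩ Sset x' ε' = ∅) :
    Disjoint (Submodule.Quotient.mk '' Sset x ε : Set (Seq ⧸ Mfin))
      (Submodule.Quotient.mk '' Sset x' ε') := by
  rw [Set.disjoint_left]
  rintro c ⟨s, hs, rfl⟩ ⟨s', hs', hmk⟩
  have h2 : s ∈ Sset x' ε' := Sset_sat hs' (mk_eq_mk_sub hmk)
  have : s ∈ Sset x ε ∩ Sset x' ε' := ⟨hs, h2⟩
  rw [hdisj] at this
  exact this

/-- The separating radius for two sequences. -/
def sepEps (x x' : Seq) : Seq :=
  fun j => if x j - x' j = 0 then 1 else |x j - x' j| / 3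

lemma sepEps_pos (x x' : Seq) : sepEps x x' ∈ Lpp := by
  intro j
  rw [sepEps]
  split_ifs with h
  · norm_num
  · have := abs_pos.2 h
    linarith

lemma Sset_disjoint {x x' : Seq} (hinf : (Function.support (x - x')).Infinite) :
    Sset x (sepEps x x') ∩ Sset x' (sepEps x x') = ∅ := by
  ext z
  simp only [Set.mem_inter_iff, Set.mem_empty_iff_false, iff_false, not_and]
  rintro ⟨m, hm, hb⟩ ⟨m', hm', hb'⟩
  have hfin : (Function.support (m' - m)).Finite :=
    finite_of_mem_Mfin (Submodule.sub_mem _ hm' hm)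
  obtain ⟨j, hj⟩ := (hinf.diff hfin).nonempty
  obtain ⟨hj1, hj2⟩ := hj
  have hd : x j - x' j ≠ 0 := by
    simpa [Function.mem_support] using hj1
  have hmm : m' j - m j = 0 := by
    have : ¬ (m' - m) j ≠ 0 := by simpa [Function.mem_support] using hj2
    simpa using this
  have h1 := hb j
  have h2 := hb' j
  rw [sepEps, if_neg hd] at h1 h2
  have key : |x j - x' j| ≤ |z j - x' j - m' j| + |z j - x j - m j| := by
    have heq : x j - x' j = (z j - x' j - m' j) - (z j - x j - m j) := by
      have hmj : m' j = m j := by linarith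
      rw [hmj]; ring
    rw [heq, sub_eq_add_neg]
    calc |(z j - x' j - m' j) + -(z j - x j - m j)|
        ≤ |z j - x' j - m' j| + |-(z j - x j - m j)| := abs_add_le _ _
      _ = |z j - x' j - m' j| + |z j - x j - m j| := by rw [abs_neg]
  have hpos : 0 < |x j - x' j| := abs_pos.2 hd
  linarith

end Aux

/-- Remark 3.3: the quotient L⁰-module E/M with the quotient topology 𝒯_Π coinduced by the
quotient map Π is Hausdorff, yet 𝒯_Π is not induced by any family of L⁰-seminorms on E/M. -/
theorem statement12 (T : TopologicalSpace Seq)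
    (hT : ∀ V : Set Seq, IsOpen[T] V ↔ ∀ y ∈ V, ∃ ε ∈ Lpp, ∀ u ∈ Uball ε, y + u ∈ V) :
    @T2Space (Seq ⧸ Mfin)
      (T.coinduced (Submodule.Quotient.mk : Seq → Seq ⧸ Mfin)) ∧
    ¬ ∃ Ps : Set ((Seq ⧸ Mfin) → Seq), (∀ p ∈ Ps, IsSeqSeminorm p) ∧
      ∀ V : Set (Seq ⧸ Mfin),
        IsOpen[T.coinduced (Submodule.Quotient.mk : Seq → Seq ⧸ Mfin)] V ↔
          ∀ y ∈ V, ∃ Qs : Set ((Seq ⧸ Mfin) → Seq), Qs.Finite ∧ Qs ⊆ Ps ∧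
            ∃ ε ∈ Lpp, ∀ u : Seq ⧸ Mfin, (∀ p ∈ Qs, p u ≤ ε) → y + u ∈ V := by
  constructor
  · -- Hausdorff
    refine @T2Space.mk _ _ (fun a b hab => ?_)
    obtain ⟨x, rfl⟩ := Submodule.Quotient.mk_surjective Mfin a
    obtain ⟨x', rfl⟩ := Submodule.Quotient.mk_surjective Mfin b
    have hxx : x - x' ∉ Mfin := fun h => hab ((Submodule.Quotient.eq _).2 h)
    have hinf : (Function.support (x - x')).Infinite :=
      fun hfin => hxx (mem_Mfin_of_finite hfin)
    refine ⟨Submodule.Quotient.mk '' Sset x (sepEps x x'),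
      Submodule.Quotient.mk '' Sset x' (sepEps x x'), ?_, ?_, ?_, ?_, ?_⟩
    · rw [isOpen_coinduced, preimage_image_Sset]
      exact Sset_open T hT
    · rw [isOpen_coinduced, preimage_image_Sset]
      exact Sset_open T hT
    · exact ⟨x, self_mem_Sset (sepEps_pos x x'), rfl⟩
    · exact ⟨x', self_mem_Sset (sepEps_pos x x'), rfl⟩
    · exact images_disjoint (Sset_disjoint hinf)
  · -- not seminormable
    rintro ⟨Ps, hPs, hiff⟩
    set ε₀ : Seq := fun _ => 1/3 with hε₀def
    have hε₀ : ε₀ ∈ Lpp := fun j => by rw [hε₀def]; norm_num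
    set V : Set (Seq ⧸ Mfin) := Submodule.Quotient.mk '' Sset 0 ε₀ with hVdef
    have hVopen :
        IsOpen[T.coinduced (Submodule.Quotient.mk : Seq → Seq ⧸ Mfin)] V := by
      rw [hVdef, isOpen_coinduced, preimage_image_Sset]
      exact Sset_open T hT
    have h0V : (0 : Seq ⧸ Mfin) ∈ V := by
      refine ⟨0, self_mem_Sset hε₀, ?_⟩
      simp
    obtain ⟨Qs, _, hQP, ε', hε', hcov⟩ := (hiff V).1 hVopen 0 h0V
    have hx1 : (Submodule.Quotient.mk (fun _ => (1:ℝ)) : Seq ⧸ Mfin) ∈ V := by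
      have h := hcov (Submodule.Quotient.mk (fun _ => (1:ℝ))) ?_
      · simpa using h
      · intro p hp
        have hz := seminorm_eq_zero (hPs p (hQP hp))
          (Submodule.Quotient.mk (fun _ => (1:ℝ)) : Seq ⧸ Mfin)
        rw [hz]
        exact fun j => (hε' j).le
    obtain ⟨s, hs, hmk⟩ := hx1
    have hx1s : (fun _ => (1:ℝ)) ∈ Sset 0 ε₀ := Sset_sat hs (mk_eq_mk_sub hmk)
    obtain ⟨m, hm, hb⟩ := hx1s
    have hfin := finite_of_mem_Mfin hm
    obtain ⟨j, hj⟩ := hfin.infinite_compl.nonempty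
    have hm0 : m j = 0 := by
      have : ¬ m j ≠ 0 := by simpa [Function.mem_support] using hj
      simpa using this
    have h := hb j
    rw [hm0] at h
    simp only [Pi.zero_apply, sub_zero] at h
    rw [hε₀def] at h
    norm_num at h
end
end

section
/- Let E be a module over L⁰ = L⁰(𝔉,ℝ) and let U ⊆ E be L⁰-convex, L⁰-absorbent and L⁰-balanced with the countable concatenation property. Suppose p_U : E → L⁰₊ satisfies that p_U(x) is the greatest lower bound in (L⁰, ≤) of {ξ ∈ L⁰₊ : x ∈ ξU} for every x ∈ E. Then {x ∈ E : p_U(x) < 1 P-a.e. on Ω} ⊆ U ⊆ {x ∈ E : p_U(x) ≤ 1}. -/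
/-!
If `p_U x < 1` a.e., an exhaustion argument in the finite measure `P` yields countably many
`ξₙ ≥ 0` with `x ∈ ξₙ • U` whose sets `{ξₙ ≤ 1}` cover `Ω` up to a null set: the indicator of the
uncovered part is a lower bound of all admissible `ξ`, hence lies below `p_U x < 1`, so that part
is null. On a partition subordinate to these sets, `x = ξₙ • uₙ` agrees with `(ξₙ ⊓ 1) • uₙ`,
which lies in `U` by balancedness, and the countable concatenation property glues the pieces
to `x ∈ U`. For the other inclusion, `1` is admissible for every `x ∈ U`.
-/

noncomputable section

open MeasureTheory Set Pointwise Filter Topology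

open PaperL0

open scoped ENNReal

namespace MeasureTheory

variable {Ω ι : Type*} [MeasurableSpace Ω] (μ : Measure Ω)

theorem exists_countable_ae_cover [IsFiniteMeasure μ] (C : ι → Set Ω)
    (hC : ∀ i, MeasurableSet (C i)) :
    ∃ T : Set ι, T.Countable ∧ ∀ i, μ (C i \ ⋃ j ∈ T, C j) = 0 := by
  set f : {T : Set ι // T.Countable} → ℝ≥0∞ := fun T => μ (⋃ j ∈ T.1, C j)
  obtain ⟨u, -, hu_lim, hu_mem⟩ :=
    exists_seq_tendsto_sSup (range_nonempty_iff_nonempty.mpr ⟨⟨∅, countable_empty⟩⟩)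
      (OrderTop.bddAbove (range f))
  choose T hT using hu_mem
  set T₀ : Set ι := ⋃ k, (T k).1
  have hT₀ : T₀.Countable := countable_iUnion fun k => (T k).2
  have hsup : μ (⋃ j ∈ T₀, C j) = sSup (range f) := by
    refine le_antisymm (le_sSup ⟨⟨T₀, hT₀⟩, rfl⟩) (le_of_tendsto' hu_lim fun k => ?_)
    rw [← hT k]
    exact measure_mono (biUnion_subset_biUnion_left (subset_iUnion (fun k => (T k).1) k))
  refine ⟨T₀, hT₀, fun i => ?_⟩
  have h_insert : μ (C i ∪ ⋃ j ∈ T₀, C j) ≤ μ (⋃ j ∈ T₀, C j) := by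
    rw [hsup, ← biUnion_insert]
    exact le_sSup ⟨⟨insert i T₀, hT₀.insert i⟩, rfl⟩
  rw [measure_sdiff' _ (MeasurableSet.biUnion hT₀ fun j _ => hC j).nullMeasurableSet
    (measure_ne_top _ _)]
  exact tsub_eq_zero_of_le h_insert

theorem exists_seq_ae_cover [IsFiniteMeasure μ] [Nonempty ι] (C : ι → Set Ω)
    (hC : ∀ i, MeasurableSet (C i)) :
    ∃ τ : ℕ → ι, ∀ i, μ (C i \ ⋃ n, C (τ n)) = 0 := by
  obtain ⟨T, hT, hT_cover⟩ := exists_countable_ae_cover μ C hC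
  obtain ⟨τ, hτ⟩ := (hT.insert (Classical.arbitrary ι)).exists_eq_range (insert_nonempty _ _)
  refine ⟨τ, fun i => measure_mono_null (sdiff_subset_sdiff_right ?_) (hT_cover i)⟩
  rw [← biUnion_range, ← hτ]
  exact biUnion_subset_biUnion_left (subset_insert _ _)

end MeasureTheory

namespace PaperL0

variable {Ω : Type*} [MeasurableSpace Ω] {μ : Measure Ω}

lemma coeFn_ind {A : Set Ω} (hA : MeasurableSet A) :
    ⇑(ind μ A) =ᵐ[μ] A.indicator fun _ => (1 : ℝ) := by
  rw [ind, dif_pos hA]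
  exact AEEqFun.coeFn_mk _ _

lemma zero_le_one_L0 : (0 : Ω →ₘ[μ] ℝ) ≤ 1 := by
  rw [← AEEqFun.coeFn_le]
  filter_upwards [AEEqFun.coeFn_zero (μ := μ) (β := ℝ), AEEqFun.coeFn_one (μ := μ) (β := ℝ)]
    with ω h0 h1
  simp [h0, h1]

lemma Lspos_subset_Lpos : Lspos μ ⊆ Lpos μ := fun ξ hξ => by
  show (0 : Ω →ₘ[μ] ℝ) ≤ ξ
  rw [← AEEqFun.coeFn_le]
  filter_upwards [hξ, AEEqFun.coeFn_zero (μ := μ) (β := ℝ)] with ω h h0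
  simpa [h0] using h.le

lemma aabs_inf_one_le_one {ξ : Ω →ₘ[μ] ℝ} (hξ : 0 ≤ ξ) : aabs (ξ ⊓ 1) ≤ 1 := by
  rw [aabs, ← AEEqFun.coeFn_le]
  filter_upwards [AEEqFun.coeFn_sup (ξ ⊓ 1) (-(ξ ⊓ 1)), AEEqFun.coeFn_neg (ξ ⊓ 1),
    AEEqFun.coeFn_inf ξ 1, AEEqFun.coeFn_one (μ := μ) (β := ℝ),
    AEEqFun.coeFn_zero (μ := μ) (β := ℝ), AEEqFun.coeFn_le.mpr hξ]
    with ω h_sup h_neg h_inf h1 h0 hξω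
  simp only [h_sup, h_neg, Pi.neg_apply, h_inf, h1, Pi.one_apply]
  simp only [h0, Pi.zero_apply] at hξω
  exact sup_le inf_le_right (by linarith [le_inf hξω zero_le_one])

lemma ind_mul_inf_one {A : Set Ω} (hA : MeasurableSet A) {ξ : Ω →ₘ[μ] ℝ}
    (hξA : ∀ᵐ ω ∂μ, ω ∈ A → ξ ω ≤ 1) : ind μ A * (ξ ⊓ 1) = ind μ A * ξ := by
  apply AEEqFun.ext
  filter_upwards [AEEqFun.coeFn_mul (ind μ A) (ξ ⊓ 1), AEEqFun.coeFn_mul (ind μ A) ξ,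
    AEEqFun.coeFn_inf ξ 1, AEEqFun.coeFn_one (μ := μ) (β := ℝ), coeFn_ind hA, hξA]
    with ω h_mul h_mul' h_inf h1 h_ind hω
  simp only [h_mul, h_mul', Pi.mul_apply, h_inf, h1, Pi.one_apply, h_ind]
  by_cases hωA : ω ∈ A
  · simp [hωA, hω hωA]
  · simp [hωA]

variable {E : Type*} [AddCommGroup E] [Module (Ω →ₘ[μ] ℝ) E]

lemma exists_mem_ind_smul_eq {U : Set E} (hbal : IsL0Balanced μ U) {x : E}
    {ξ : Ω →ₘ[μ] ℝ} (hξ : 0 ≤ ξ) (hx : x ∈ ξ • U) {A : Set Ω} (hA : MeasurableSet A)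
    (hξA : ∀ᵐ ω ∂μ, ω ∈ A → ξ ω ≤ 1) : ∃ y ∈ U, ind μ A • x = ind μ A • y := by
  obtain ⟨u, hu, rfl⟩ := Set.mem_smul_set.mp hx
  refine ⟨(ξ ⊓ 1) • u, hbal u hu _ (aabs_inf_one_le_one hξ), ?_⟩
  rw [smul_smul, smul_smul, ind_mul_inf_one hA hξA]

lemma exists_isMeasPartition_ae_subset {C : ℕ → Set Ω} (hC : ∀ n, MeasurableSet (C n))
    (hcover : ∀ᵐ ω ∂μ, ∃ n, ω ∈ C n) :
    ∃ A : ℕ → Set Ω, IsMeasPartition A ∧ ∀ n, ∀ᵐ ω ∂μ, ω ∈ A n → ω ∈ C n := by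
  set C' : ℕ → Set Ω := fun n => C n ∪ (⋃ m, C m)ᶜ
  refine ⟨disjointed C', ⟨MeasurableSet.disjointed fun n => (hC n).union
    (MeasurableSet.iUnion hC).compl, disjoint_disjointed C', ?_⟩, fun n => ?_⟩
  · refine iUnion_disjointed.trans (eq_univ_of_forall fun ω => ?_)
    by_cases hω : ω ∈ ⋃ m, C m
    · obtain ⟨m, hm⟩ := mem_iUnion.mp hω
      exact mem_iUnion.mpr ⟨m, Or.inl hm⟩
    · exact mem_iUnion.mpr ⟨0, Or.inr hω⟩
  · filter_upwards [hcover] with ω ⟨m, hm⟩ hωA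
    exact (disjointed_subset C' n hωA).resolve_right (not_not.mpr (mem_iUnion.mpr ⟨m, hm⟩))

lemma exists_seq_ae_le_one_of_isGLB [IsFiniteMeasure μ] {S : Set (Ω →ₘ[μ] ℝ)}
    {p : Ω →ₘ[μ] ℝ} (hp : IsGLB S p) (hS : S ⊆ Lpos μ) (hS_ne : S.Nonempty)
    (hp_lt : ∀ᵐ ω ∂μ, p ω < 1) :
    ∃ σ : ℕ → Ω →ₘ[μ] ℝ, (∀ n, σ n ∈ S) ∧ ∀ᵐ ω ∂μ, ∃ n, σ n ω ≤ 1 := by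
  have : Nonempty S := hS_ne.to_subtype
  set C : S → Set Ω := fun ξ => {ω | (ξ : Ω →ₘ[μ] ℝ) ω ≤ 1}
  have hC (ξ : S) : MeasurableSet (C ξ) :=
    measurableSet_le (ξ : Ω →ₘ[μ] ℝ).measurable measurable_const
  obtain ⟨τ, hτ⟩ := exists_seq_ae_cover μ C hC
  set D := ⋃ n, C (τ n)
  have hD : MeasurableSet D := MeasurableSet.iUnion fun n => hC (τ n)
  -- Off `D` every element of `S` exceeds `1` a.e., so the indicator of `Dᶜ` bounds `S` below.
  have h_lb : ind μ Dᶜ ∈ lowerBounds S := by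
    intro ξ hξ
    rw [← AEEqFun.coeFn_le]
    filter_upwards [measure_eq_zero_iff_ae_notMem.mp (hτ ⟨ξ, hξ⟩),
      AEEqFun.coeFn_le.mpr (hS hξ), AEEqFun.coeFn_zero (μ := μ) (β := ℝ), coeFn_ind hD.compl]
      with ω hω h_nonneg h0 h_ind
    rw [h0] at h_nonneg
    by_cases hωD : ω ∈ Dᶜ
    · simp only [h_ind, indicator_of_mem hωD]
      by_contra! h
      exact hω ⟨h.le, hωD⟩
    · simpa only [h_ind, indicator_of_notMem hωD, Pi.zero_apply] using h_nonneg
  refine ⟨fun n => τ n, fun n => (τ n).2, ?_⟩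
  filter_upwards [AEEqFun.coeFn_le.mpr (hp.2 h_lb), hp_lt, coeFn_ind hD.compl]
    with ω h_le h_lt h_ind
  by_contra! h
  have hωD : ω ∈ Dᶜ := by simpa [D, C] using h
  rw [h_ind, indicator_of_mem hωD] at h_le
  exact (h_le.trans_lt h_lt).false

end PaperL0

open PaperL0

theorem statement16_general
    {Ω : Type*} [MeasurableSpace Ω] (P : Measure Ω) [IsProbabilityMeasure P]
    {E : Type*} [AddCommGroup E] [Module (Ω →ₘ[P] ℝ) E]
    (U : Set E)
    (habs : IsL0Absorbent P U) (hbal : IsL0Balanced P U)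
    (hccp : HasCCP P U)
    (pU : E → Ω →ₘ[P] ℝ)
    (hpU : ∀ x : E, IsGLB {ξ : Ω →ₘ[P] ℝ | ξ ∈ Lpos P ∧ x ∈ ξ • U} (pU x)) :
    {x : E | ∀ᵐ ω ∂P, (pU x) ω < 1} ⊆ U ∧ U ⊆ {x : E | pU x ≤ 1} := by
  refine ⟨fun x hx => ?_, fun x hx => (hpU x).1 ⟨zero_le_one_L0, x, hx, one_smul _ x⟩⟩
  obtain ⟨ξ₀, hξ₀, hxξ₀⟩ := habs x
  obtain ⟨σ, hσ, hσ_cover⟩ := exists_seq_ae_le_one_of_isGLB (hpU x) (fun _ h => h.1)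
    ⟨ξ₀, Lspos_subset_Lpos hξ₀, hxξ₀⟩ hx
  obtain ⟨A, hA, hAσ⟩ := exists_isMeasPartition_ae_subset
    (fun n => measurableSet_le (σ n).measurable measurable_const) hσ_cover
  choose y hyU hy using fun n => exists_mem_ind_smul_eq hbal (hσ n).1 (hσ n).2 (hA.1 n) (hAσ n)
  exact (hccp y hyU A hA).2 x hy

/-- Proposition 3.8: if U is L⁰-convex, L⁰-absorbent and L⁰-balanced and has the countable
concatenation property, then {x : p_U x < 1 a.e.} ⊆ U ⊆ {x : p_U x ≤ 1}. -/
theorem statement16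
    {Ω : Type*} [MeasurableSpace Ω] (P : Measure Ω) [IsProbabilityMeasure P]
    {E : Type*} [AddCommGroup E] [Module (Ω →ₘ[P] ℝ) E]
    (U : Set E)
    (hconv : IsL0Convex P U) (habs : IsL0Absorbent P U) (hbal : IsL0Balanced P U)
    (hccp : HasCCP P U)
    (pU : E → Ω →ₘ[P] ℝ)
    (hpU : ∀ x : E, IsGLB {ξ : Ω →ₘ[P] ℝ | ξ ∈ Lpos P ∧ x ∈ ξ • U} (pU x)) :
    {x : E | ∀ᵐ ω ∂P, (pU x) ω < 1} ⊆ U ∧ U ⊆ {x : E | pU x ≤ 1} :=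
  statement16_general P U habs hbal hccp pU hpU
end
end
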